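/- arXiv:1201.3419 — 4 statements merged into one kernel-verified Lean document; each statement's English description precedes it below -/
import Mathlib

section
/- Under Assumptions 1 and 2, the Cramér root θ* is the root associated to the cycle increment: E_{x_0}[exp(θ* S_{τ(x_0)})] = 1. -/
/-!
Let `A x y = K x y * E[exp (θ* γ(y, ξ₁))]` and let `u = u_{θ*}`. Since `ψ(θ*) = 0`, the
eigenvalue relation says `A u = u`, so `Q = D_u⁻¹ A D_u` is a stochastic matrix with the same
support as `K`.

Split the expectation according to the value of `τ`. By the Markov property and the independence
of the marks, `E[exp (θ* S_τ); τ = k + 1]` is the total `A`-weight of the paths that leave `x₀`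
and first come back to it at time `k + 1`. Such a path is a loop at `x₀`, so the factors of `u`
telescope along it and its `A`-weight equals its `Q`-weight. The first-return probabilities of an
irreducible stochastic matrix on a finite set sum to `1`: the row sums of its taboo matrix decay
geometrically. The same argument applied to `K` shows that `τ` is almost surely finite.
-/

open MeasureTheory ProbabilityTheory Real Filter
open scoped ENNReal Topology

lemma Fin.sum_univ_eq_sum_snoc {S β : Type*} [Fintype S] [AddCommMonoid β] {n : ℕ}
    (F : (Fin (n + 2) → S) → β) :
    ∑ v, F v = ∑ w : Fin (n + 1) → S, ∑ y, F (Fin.snoc w y) := by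
  rw [← (Fin.snocEquiv fun _ => S).sum_comp, Fintype.sum_prod_type, Finset.sum_comm]
  rfl

namespace Matrix

section PathWeight

variable {S R : Type*} [CommSemiring R]

def pathWeight {n : ℕ} (M : Matrix S S R) (v : Fin (n + 1) → S) : R :=
  ∏ i : Fin n, M (v i.castSucc) (v i.succ)

def taboo [DecidableEq S] (x0 : S) (M : Matrix S S R) : Matrix S S R :=
  of fun x y => if y = x0 then 0 else M x y

abbrev Avoids {n : ℕ} (x0 : S) (v : Fin (n + 1) → S) : Prop :=
  ∀ i : Fin n, v i.succ ≠ x0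

lemma pathWeight_snoc {n : ℕ} (M : Matrix S S R) (w : Fin (n + 1) → S) (y : S) :
    pathWeight M (Fin.snoc w y : Fin (n + 2) → S) = pathWeight M w * M (w (Fin.last n)) y := by
  rw [pathWeight, Fin.prod_univ_castSucc, pathWeight]
  simp only [Fin.snoc_castSucc, Fin.succ_last, Fin.snoc_last, Fin.succ_castSucc]

lemma pathWeight_taboo [DecidableEq S] {n : ℕ} (x0 : S) (M : Matrix S S R)
    (v : Fin (n + 1) → S) :
    pathWeight (taboo x0 M) v = if Avoids x0 v then pathWeight M v else 0 := by
  split_ifs with h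
  · exact Finset.prod_congr rfl fun i _ => if_neg (h i)
  · obtain ⟨i, hi⟩ : ∃ i : Fin n, v i.succ = x0 := by simpa using h
    exact Finset.prod_eq_zero (Finset.mem_univ i) (if_pos hi)

variable [Fintype S] [DecidableEq S]

theorem sum_pathWeight_mul (M : Matrix S S R) (f : S → R) (n : ℕ) (x : S) :
    ∑ v : Fin (n + 1) → S, (if v 0 = x then pathWeight M v * f (v (Fin.last n)) else 0)
      = (M ^ n *ᵥ f) x := by
  induction n generalizing f with
  | zero =>
    rw [← (Equiv.funUnique (Fin 1) S).symm.sum_comp]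
    simp [pathWeight, mulVec, dotProduct, one_apply]
  | succ n ih =>
    rw [Fin.sum_univ_eq_sum_snoc, pow_succ, ← mulVec_mulVec, ← ih]
    refine Finset.sum_congr rfl fun w _ => ?_
    simp only [Fin.snoc_apply_zero, Fin.snoc_last, pathWeight_snoc]
    split_ifs <;> simp [mulVec, dotProduct, Finset.mul_sum, mul_assoc]

theorem sum_pathWeight_avoids (x0 : S) (M : Matrix S S R) (n : ℕ) (x : S) :
    ∑ v : Fin (n + 1) → S, (if v 0 = x ∧ Avoids x0 v then pathWeight M v else 0)
      = (taboo x0 M ^ n *ᵥ 1) x := by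
  rw [← sum_pathWeight_mul]
  simp only [pathWeight_taboo, Pi.one_apply, mul_one, ite_and]

theorem sum_pathWeight_firstReturn (x0 : S) (M : Matrix S S R) (n : ℕ) (x : S) :
    ∑ v : Fin (n + 2) → S,
      (if v 0 = x ∧ Avoids x0 (Fin.init v) ∧ v (Fin.last _) = x0 then pathWeight M v else 0)
      = (taboo x0 M ^ n * M) x x0 := by
  have hcol : (taboo x0 M ^ n * M) x x0 = (taboo x0 M ^ n *ᵥ fun z => M z x0) x := rfl
  rw [hcol, ← sum_pathWeight_mul, Fin.sum_univ_eq_sum_snoc]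
  refine Finset.sum_congr rfl fun w _ => ?_
  simp only [Fin.init_snoc, Fin.snoc_last, Fin.snoc_apply_zero, pathWeight_snoc, pathWeight_taboo,
    ite_and, Finset.sum_ite_irrel, Finset.sum_ite_eq', Finset.mem_univ, if_true,
    Finset.sum_const_zero]
  split_ifs <;> simp

end PathWeight

section FirstReturn

variable {S R : Type*} [Fintype S] [DecidableEq S] [CommSemiring R] {M : Matrix S S R} {x0 : S}

lemma mulVec_one_eq_taboo_mulVec_one_add (x0 : S) (M : Matrix S S R) :
    M *ᵥ 1 = taboo x0 M *ᵥ 1 + fun x => M x x0 := by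
  funext x
  have hsplit : ∀ y, M x y = (if y = x0 then 0 else M x y) + if y = x0 then M x y else 0 := by
    intro y; split_ifs <;> simp
  simp only [mulVec, dotProduct, taboo, of_apply, Pi.one_apply, mul_one, Pi.add_apply]
  rw [Finset.sum_congr rfl fun y _ => hsplit y, Finset.sum_add_distrib, Finset.sum_ite_eq']
  simp

lemma pow_mulVec_one (hM : M *ᵥ 1 = 1) (n : ℕ) : M ^ n *ᵥ 1 = 1 := by
  induction n with
  | zero => exact one_mulVec 1
  | succ n ih => rw [pow_succ, ← mulVec_mulVec, hM, ih]

lemma taboo_pow_succ_mulVec_one_add (hM : M *ᵥ 1 = 1) (n : ℕ) (x : S) :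
    (taboo x0 M ^ (n + 1) *ᵥ 1) x + (taboo x0 M ^ n * M) x x0 = (taboo x0 M ^ n *ᵥ 1) x := by
  conv_rhs => rw [← hM, mulVec_one_eq_taboo_mulVec_one_add x0, mulVec_add, mulVec_mulVec,
    ← pow_succ]
  rfl

lemma sum_taboo_pow_mul_add (hM : M *ᵥ 1 = 1) (n : ℕ) (x : S) :
    ∑ k ∈ Finset.range n, (taboo x0 M ^ k * M) x x0 + (taboo x0 M ^ n *ᵥ 1) x = 1 := by
  induction n with
  | zero => simp
  | succ n ih =>
    rw [Finset.sum_range_succ, add_assoc, add_comm ((taboo x0 M ^ n * M) x x0),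
      taboo_pow_succ_mulVec_one_add hM, ih]

end FirstReturn

section Recurrence

variable {S : Type*} [Fintype S] [DecidableEq S] {M : Matrix S S ℝ≥0∞} {x0 : S}

lemma antitone_taboo_pow_mulVec_one (hM : M *ᵥ 1 = 1) (x : S) :
    Antitone fun n => (taboo x0 M ^ n *ᵥ 1) x :=
  antitone_nat_of_succ_le fun n => le_self_add.trans_eq (taboo_pow_succ_mulVec_one_add hM n x)

lemma taboo_pow_succ_mulVec_one_add_pow_le (hM : M *ᵥ 1 = 1) (n : ℕ) (x : S) :
    (taboo x0 M ^ (n + 1) *ᵥ 1) x + (M ^ (n + 1)) x x0 ≤ 1 := by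
  have hcol : (M ^ (n + 1)) x x0 = (M ^ (n + 1) *ᵥ fun y => if y = x0 then 1 else 0) x := by
    simp [mulVec, dotProduct]
  -- a path avoiding `x₀` does not end at `x₀`
  calc (taboo x0 M ^ (n + 1) *ᵥ 1) x + (M ^ (n + 1)) x x0
      = ∑ v : Fin (n + 2) → S, ((if v 0 = x ∧ Avoids x0 v then pathWeight M v else 0) +
          if v 0 = x then pathWeight M v * if v (Fin.last _) = x0 then 1 else 0 else 0) := by
        rw [hcol, ← sum_pathWeight_avoids, ← sum_pathWeight_mul M, ← Finset.sum_add_distrib]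
    _ ≤ ∑ v : Fin (n + 2) → S,
          if v 0 = x then pathWeight M v * (1 : S → ℝ≥0∞) (v (Fin.last _)) else 0 := by
        refine Finset.sum_le_sum fun v _ => ?_
        by_cases hav : Avoids x0 v
        · have hlast : v (Fin.last _) ≠ x0 := by simpa using hav (Fin.last _)
          split_ifs <;> simp_all
        · split_ifs <;> simp_all
    _ = 1 := by rw [sum_pathWeight_mul, pow_mulVec_one hM, Pi.one_apply]

lemma taboo_pow_mul_mulVec_one_le {N : ℕ} {c : ℝ≥0∞} (hc : ∀ y, (taboo x0 M ^ N *ᵥ 1) y ≤ c)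
    (m : ℕ) (x : S) : (taboo x0 M ^ (m * N) *ᵥ 1) x ≤ c ^ m := by
  induction m generalizing x with
  | zero => simp
  | succ m ih =>
    calc (taboo x0 M ^ ((m + 1) * N) *ᵥ 1) x
        = (taboo x0 M ^ (m * N) *ᵥ (taboo x0 M ^ N *ᵥ 1)) x := by
          rw [mulVec_mulVec, ← pow_add, Nat.succ_mul]
      _ ≤ (taboo x0 M ^ (m * N) *ᵥ (c • 1)) x :=
          dotProduct_le_dotProduct_of_nonneg_left (fun y => by simpa using hc y) fun _ => zero_le
      _ ≤ c ^ (m + 1) := by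
          rw [mulVec_smul, Pi.smul_apply, smul_eq_mul, pow_succ']
          gcongr
          exact ih x

/-- From every state the chain hits `x0` within `N` steps with probability at least `1 - c > 0`,
so the probability of avoiding it for `m * N` steps is at most `c ^ m`. -/
theorem tendsto_taboo_pow_mulVec_one_nhds_zero (hM : M *ᵥ 1 = 1)
    (hacc : ∀ y, ∃ n, (M ^ (n + 1)) y x0 ≠ 0) (x : S) :
    Tendsto (fun n => (taboo x0 M ^ n *ᵥ 1) x) atTop (𝓝 0) := by
  choose n hn using hacc
  have hlt : ∀ y, (taboo x0 M ^ (n y + 1) *ᵥ 1) y < 1 := fun y => by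
    have hle := taboo_pow_succ_mulVec_one_add_pow_le (x0 := x0) hM (n y) y
    have hfin : (taboo x0 M ^ (n y + 1) *ᵥ 1) y ≠ ⊤ :=
      ne_top_of_le_ne_top ENNReal.one_ne_top (le_self_add.trans hle)
    exact (ENNReal.lt_add_right hfin (hn y)).trans_le hle
  set N := Finset.univ.sup fun y => n y + 1
  set c := Finset.univ.sup fun y => (taboo x0 M ^ N *ᵥ 1) y
  have hc : c < 1 := (Finset.sup_lt_iff zero_lt_one).2 fun y _ =>
    (antitone_taboo_pow_mulVec_one hM y (Finset.le_sup (f := fun y => n y + 1)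
      (Finset.mem_univ y))).trans_lt (hlt y)
  have hinf : ⨅ k, (taboo x0 M ^ k *ᵥ 1) x = 0 :=
    le_antisymm (ge_of_tendsto' (ENNReal.tendsto_pow_atTop_nhds_zero_of_lt_one hc) fun m =>
      (iInf_le _ (m * N)).trans (taboo_pow_mul_mulVec_one_le
        (fun y => Finset.le_sup (f := fun y => (taboo x0 M ^ N *ᵥ 1) y) (Finset.mem_univ y)) m x))
      zero_le
  exact hinf ▸ tendsto_atTop_iInf (antitone_taboo_pow_mulVec_one hM x)

theorem tsum_taboo_pow_mul (hM : M *ᵥ 1 = 1)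
    (hacc : ∀ y, ∃ n, (M ^ (n + 1)) y x0 ≠ 0) (x : S) :
    ∑' k, (taboo x0 M ^ k * M) x x0 = 1 := by
  refine (ENNReal.summable.hasSum_iff_tendsto_nat.2 ?_).tsum_eq
  have hsum : ∀ n, ∑ k ∈ Finset.range n, (taboo x0 M ^ k * M) x x0
      = 1 - (taboo x0 M ^ n *ᵥ 1) x := fun n =>
    ENNReal.eq_sub_of_add_eq (ne_top_of_le_ne_top ENNReal.one_ne_top
      (le_add_self.trans (sum_taboo_pow_mul_add hM n x).le)) (sum_taboo_pow_mul_add hM n x)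
  simpa [hsum] using ENNReal.Tendsto.sub tendsto_const_nhds
    (tendsto_taboo_pow_mulVec_one_nhds_zero hM hacc x) (Or.inl ENNReal.one_ne_top)

end Recurrence

section Accessibility

variable {S : Type*} [Fintype S] [DecidableEq S] {K : Matrix S S ℝ}

lemma pow_apply_ne_zero_of_pos (hKnn : ∀ x y, 0 ≤ K x y) {M : Matrix S S ℝ≥0∞}
    (hM : ∀ x y, 0 < K x y → M x y ≠ 0) (n : ℕ) (x y : S) (h : 0 < (K ^ n) x y) :
    (M ^ n) x y ≠ 0 := by
  induction n generalizing y with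
  | zero =>
    obtain rfl : x = y := by by_contra hxy; simp [one_apply_ne hxy] at h
    simp
  | succ n ih =>
    rw [pow_succ, mul_apply] at h ⊢
    obtain ⟨z, -, hz⟩ := (Finset.sum_pos_iff_of_nonneg fun z _ =>
      mul_nonneg (pow_apply_nonneg hKnn n x z) (hKnn z y)).1 h
    obtain ⟨hxz, hzy⟩ := (pos_and_pos_or_neg_and_neg_of_mul_pos hz).resolve_right
      fun h' => (pow_apply_nonneg hKnn n x z).not_gt h'.1
    intro h0
    exact mul_ne_zero (ih z hxz) (hM z y hzy) (Finset.sum_eq_zero_iff.1 h0 z (Finset.mem_univ z))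

lemma exists_pow_succ_apply_ne_zero (hKnn : ∀ x y, 0 ≤ K x y) (hKrow : ∀ x, ∑ y, K x y = 1)
    (hKirr : ∀ x y, ∃ n : ℕ, 0 < (K ^ n) x y) {M : Matrix S S ℝ≥0∞}
    (hM : ∀ x y, 0 < K x y → M x y ≠ 0) (x y : S) : ∃ n, (M ^ (n + 1)) x y ≠ 0 := by
  obtain ⟨z, hz⟩ : ∃ z, 0 < K x z := by
    by_contra! h
    have := Finset.sum_nonpos fun z (_ : z ∈ Finset.univ) => h z
    linarith [hKrow x]
  obtain ⟨n, hn⟩ := hKirr z y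
  refine ⟨n, fun h0 => ?_⟩
  rw [pow_succ', mul_apply] at h0
  exact mul_ne_zero (hM x z hz) (pow_apply_ne_zero_of_pos hKnn hM n z y hn)
    (Finset.sum_eq_zero_iff.1 h0 z (Finset.mem_univ z))

end Accessibility

section DiagonalConj

variable {S R : Type*} [Fintype S] [DecidableEq S] [CommSemiring R] {u w : S → R}

lemma taboo_diagonal_mul_mul_diagonal (x0 : S) (M : Matrix S S R) (u w : S → R) :
    taboo x0 (diagonal u * M * diagonal w) = diagonal u * taboo x0 M * diagonal w := by
  ext x y
  simp only [taboo, of_apply, mul_diagonal, diagonal_mul]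
  split_ifs <;> simp

lemma diagonal_mul_diagonal_eq_one (huw : ∀ x, u x * w x = 1) :
    diagonal u * diagonal w = 1 := by
  rw [diagonal_mul_diagonal, ← diagonal_one]
  exact congrArg diagonal (funext huw)

lemma diagonal_conj_mul (huw : ∀ x, u x * w x = 1) (M N : Matrix S S R) :
    diagonal u * M * diagonal w * (diagonal u * N * diagonal w)
      = diagonal u * (M * N) * diagonal w := by
  have hwu : diagonal w * diagonal u = 1 :=
    diagonal_mul_diagonal_eq_one fun x => by rw [mul_comm, huw]
  simp only [Matrix.mul_assoc]
  rw [← Matrix.mul_assoc (diagonal w), hwu, Matrix.one_mul]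

lemma diagonal_conj_pow (huw : ∀ x, u x * w x = 1) (M : Matrix S S R) (k : ℕ) :
    (diagonal u * M * diagonal w) ^ k = diagonal u * M ^ k * diagonal w := by
  induction k with
  | zero => rw [pow_zero, pow_zero, Matrix.mul_one, diagonal_mul_diagonal_eq_one huw]
  | succ k ih => rw [pow_succ, ih, diagonal_conj_mul huw, pow_succ]

lemma taboo_pow_mul_diagonal_conj_apply (huw : ∀ x, u x * w x = 1) (x0 : S) (M : Matrix S S R)
    (k : ℕ) :
    (taboo x0 (diagonal u * M * diagonal w) ^ k * (diagonal u * M * diagonal w)) x0 x0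
      = (taboo x0 M ^ k * M) x0 x0 := by
  rw [taboo_diagonal_mul_mul_diagonal, diagonal_conj_pow huw, diagonal_conj_mul huw, mul_diagonal,
    diagonal_mul, mul_right_comm, huw, one_mul]

lemma diagonal_conj_mulVec_one (huw : ∀ x, u x * w x = 1) {A : Matrix S S R} (hA : A *ᵥ w = w) :
    (diagonal u * A * diagonal w) *ᵥ 1 = 1 := by
  have hw : diagonal w *ᵥ 1 = w := funext fun x => by simp [mulVec_diagonal]
  rw [← mulVec_mulVec, ← mulVec_mulVec, hw, hA]
  exact funext fun x => by simp [mulVec_diagonal, huw]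

end DiagonalConj

/-- Conjugating `A` by its positive eigenvector `w` gives a stochastic matrix (Doob's
`h`-transform), and the conjugation does not change the weight of a loop at `x0`. -/
theorem tsum_taboo_pow_mul_of_mulVec_eq_self {S : Type*} [Fintype S] [DecidableEq S]
    {A : Matrix S S ℝ≥0∞} {w : S → ℝ≥0∞} (hw0 : ∀ x, w x ≠ 0) (hwtop : ∀ x, w x ≠ ⊤)
    (hAw : A *ᵥ w = w) {x0 : S} (hacc : ∀ y, ∃ n, (A ^ (n + 1)) y x0 ≠ 0) :
    ∑' k, (taboo x0 A ^ k * A) x0 x0 = 1 := by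
  have huw : ∀ x, (w x)⁻¹ * w x = 1 := fun x => ENNReal.inv_mul_cancel (hw0 x) (hwtop x)
  have hQacc : ∀ y, ∃ n, ((diagonal (fun x => (w x)⁻¹) * A * diagonal w) ^ (n + 1)) y x0 ≠ 0 :=
    fun y => (hacc y).imp fun n hn => by
      simp [diagonal_conj_pow huw, mul_diagonal, diagonal_mul, hn, hw0, hwtop]
  calc ∑' k, (taboo x0 A ^ k * A) x0 x0
      = ∑' k, (taboo x0 (diagonal (fun x => (w x)⁻¹) * A * diagonal w) ^ k
          * (diagonal (fun x => (w x)⁻¹) * A * diagonal w)) x0 x0 :=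
        tsum_congr fun k => (taboo_pow_mul_diagonal_conj_apply huw x0 A k).symm
    _ = 1 := tsum_taboo_pow_mul (diagonal_conj_mulVec_one huw hAw) hQacc x0

section Tilt

variable {S : Type*}

/-- With `m y = E[exp (θ γ(y, ξ₁))]` this is the matrix whose Perron root is `exp ψ(θ)`. -/
noncomputable def tiltedKernel (K : Matrix S S ℝ) (m : S → ℝ≥0∞) : Matrix S S ℝ≥0∞ :=
  of fun x y => ENNReal.ofReal (K x y) * m y

lemma pathWeight_tiltedKernel {n : ℕ} (K : Matrix S S ℝ) (m : S → ℝ≥0∞) (v : Fin (n + 1) → S) :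
    pathWeight (tiltedKernel K m) v
      = pathWeight (tiltedKernel K 1) v * ∏ i : Fin n, m (v i.succ) := by
  simp [pathWeight, tiltedKernel, Finset.prod_mul_distrib]

lemma tiltedKernel_ofReal_mulVec_ofReal [Fintype S] {K : Matrix S S ℝ}
    (hKnn : ∀ x y, 0 ≤ K x y) {m u : S → ℝ} (hm : ∀ y, 0 ≤ m y) (hu : ∀ y, 0 ≤ u y) :
    tiltedKernel K (fun y => ENNReal.ofReal (m y)) *ᵥ (fun y => ENNReal.ofReal (u y))
      = fun x => ENNReal.ofReal (∑ y, K x y * (m y * u y)) := by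
  funext x
  simp only [mulVec, dotProduct, tiltedKernel, of_apply]
  rw [ENNReal.ofReal_sum_of_nonneg fun y _ => mul_nonneg (hKnn x y) (mul_nonneg (hm y) (hu y))]
  simp only [ENNReal.ofReal_mul (hKnn _ _), ENNReal.ofReal_mul (hm _), mul_assoc]

end Tilt

end Matrix

section ReturnTime

variable {S : Type*} (x : ℕ → S) (x0 : S)

lemma sInf_return_eq_zero_iff :
    sInf {j | 1 ≤ j ∧ x j = x0} = 0 ↔ ∀ j, 1 ≤ j → x j ≠ x0 := by
  rw [Nat.sInf_eq_zero]
  constructor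
  · rintro (⟨h, -⟩ | h) j hj hx
    · omega
    · exact (Set.eq_empty_iff_forall_notMem.1 h j) ⟨hj, hx⟩
  · intro h
    exact Or.inr (Set.eq_empty_iff_forall_notMem.2 fun j hj => h j hj.1 hj.2)

lemma sInf_return_eq_succ_iff (k : ℕ) :
    sInf {j | 1 ≤ j ∧ x j = x0} = k + 1
      ↔ Matrix.Avoids x0 (fun i : Fin (k + 1) => x i) ∧ x (k + 1) = x0 := by
  constructor
  · intro h
    have hne : {j | 1 ≤ j ∧ x j = x0}.Nonempty := Set.nonempty_iff_ne_empty.2 fun hs => by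
      simp [hs] at h
    have hmem := h ▸ Nat.sInf_mem hne
    refine ⟨fun i hi => ?_, hmem.2⟩
    have := Nat.sInf_le (s := {j | 1 ≤ j ∧ x j = x0}) ⟨Nat.succ_pos _, hi⟩
    have hik := i.isLt
    omega
  · rintro ⟨hav, hx⟩
    refine le_antisymm (Nat.sInf_le ⟨Nat.succ_pos _, hx⟩) (le_csInf ⟨k + 1, Nat.succ_pos _, hx⟩ ?_)
    rintro j ⟨hj, hxj⟩
    by_contra! hlt
    exact hav ⟨j - 1, by omega⟩ (by simpa [show j - 1 + 1 = j by omega] using hxj)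

/-- Since `sInf ∅ = 0`, a path that never returns contributes the first summand `exp 0 = 1`. -/
lemma ofReal_exp_sum_returnTime [DecidableEq S] (a : ℕ → ℝ) :
    ENNReal.ofReal (exp (∑ k ∈ Finset.range (sInf {j | 1 ≤ j ∧ x j = x0}), a (k + 1)))
      = (if sInf {j | 1 ≤ j ∧ x j = x0} = 0 then 1 else 0)
        + ∑' k, (if Matrix.Avoids x0 (fun i : Fin (k + 1) => x i) ∧ x (k + 1) = x0 then 1 else 0)
            * ∏ i : Fin (k + 1), ENNReal.ofReal (exp (a i.succ)) := by
  have hprod : ∀ n, ENNReal.ofReal (exp (∑ k ∈ Finset.range n, a (k + 1)))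
      = ∏ i : Fin n, ENNReal.ofReal (exp (a i.succ)) := fun n => by
    rw [Real.exp_sum, ENNReal.ofReal_prod_of_nonneg fun _ _ => (exp_pos _).le, Finset.prod_range]
    rfl
  rcases Nat.eq_zero_or_pos (sInf {j | 1 ≤ j ∧ x j = x0}) with hτ | hτ
  · have hnever := (sInf_return_eq_zero_iff x x0).1 hτ
    rw [hτ, if_pos rfl, Finset.sum_range_zero, exp_zero, ENNReal.ofReal_one,
      ENNReal.tsum_eq_zero.2 fun k => by simp [hnever (k + 1) (Nat.succ_pos k)], add_zero]
  · obtain ⟨k₀, hk₀⟩ := Nat.exists_eq_add_one.2 hτ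
    rw [hk₀, if_neg (Nat.succ_ne_zero k₀), zero_add, tsum_eq_single k₀, hprod,
      if_pos ((sInf_return_eq_succ_iff x x0 k₀).1 hk₀), one_mul]
    intro k hk
    rw [if_neg fun h => hk (by have := (sInf_return_eq_succ_iff x x0 k).2 h; omega), zero_mul]

end ReturnTime

section MarkovChainWithMarks

open Matrix

variable {S Ω : Type*} [MeasurableSpace Ω] {P : Measure Ω}
  {K : Matrix S S ℝ} {X : ℕ → Ω → S} {x0 : S} {ξ η : ℕ → Ω → ℝ}

structure IsMarkovChain (P : Measure Ω) (K : Matrix S S ℝ) (x0 : S) (X : ℕ → Ω → S) : Prop where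
  ae_start : ∀ᵐ ω ∂P, X 0 ω = x0
  measure_cylinder_succ : ∀ (n : ℕ) (x : ℕ → S), P {ω | ∀ i ≤ n + 1, X i ω = x i}
    = P {ω | ∀ i ≤ n, X i ω = x i} * ENNReal.ofReal (K (x n) (x (n + 1)))

structure IsIIDMarks (P : Measure Ω) (ξ η : ℕ → Ω → ℝ) : Prop where
  measurable_left : ∀ n, Measurable (ξ n)
  measurable_right : ∀ n, Measurable (η n)
  map_eq : ∀ n : ℕ, 1 ≤ n →
    Measure.map (fun ω => (ξ n ω, η n ω)) P = Measure.map (fun ω => (ξ 1 ω, η 1 ω)) P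
  indep : iIndepFun (fun (n : ℕ) (ω : Ω) => (ξ (n + 1) ω, η (n + 1) ω)) P

lemma IsMarkovChain.measure_cylinder [DecidableEq S] [IsProbabilityMeasure P]
    (hXK : IsMarkovChain P K x0 X) (n : ℕ) (x : ℕ → S) :
    P {ω | ∀ i ≤ n, X i ω = x i} = (if x 0 = x0 then 1 else 0)
      * ∏ i ∈ Finset.range n, ENNReal.ofReal (K (x i) (x (i + 1))) := by
  induction n with
  | zero =>
    have hstart : {ω | ∀ i ≤ 0, X i ω = x i} =ᵐ[P] {_ω | x 0 = x0} := by
      rw [Filter.eventuallyEq_set]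
      filter_upwards [hXK.ae_start] with ω hω
      simp [hω, eq_comm]
    rw [measure_congr hstart]
    by_cases h : x 0 = x0 <;> simp [h]
  | succ n ih => rw [hXK.measure_cylinder_succ, ih, Finset.prod_range_succ, mul_assoc]

lemma IsMarkovChain.measure_path_eq [DecidableEq S] [IsProbabilityMeasure P]
    (hXK : IsMarkovChain P K x0 X) {n : ℕ} (v : Fin (n + 1) → S) :
    P {ω | (fun i : Fin (n + 1) => X i ω) = v}
      = (if v 0 = x0 then 1 else 0) * pathWeight (tiltedKernel K 1) v := by
  set x : ℕ → S := fun i => if h : i < n + 1 then v ⟨i, h⟩ else x0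
  have hcyl : {ω | (fun i : Fin (n + 1) => X i ω) = v} = {ω | ∀ i ≤ n, X i ω = x i} := by
    ext ω
    simp only [x, Set.mem_ofPred_eq, funext_iff, Fin.forall_iff, Nat.lt_succ_iff]
    exact forall₂_congr fun i hi => by rw [dif_pos hi]
  rw [hcyl, hXK.measure_cylinder, Finset.prod_range]
  simp [x, pathWeight, tiltedKernel]
  rfl

lemma IsIIDMarks.lintegral_comp (hm : IsIIDMarks P ξ η) {φ : ℝ → ℝ≥0∞} (hφ : Measurable φ)
    {n : ℕ} (hn : 1 ≤ n) :
    ∫⁻ ω, φ (ξ n ω) ∂P = ∫⁻ ω, φ (ξ 1 ω) ∂P :=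
  (IdentDistrib.comp
    ⟨((hm.measurable_left n).prodMk (hm.measurable_right n)).aemeasurable,
      ((hm.measurable_left 1).prodMk (hm.measurable_right 1)).aemeasurable, hm.map_eq n hn⟩
    (hφ.comp measurable_fst)).lintegral_eq

lemma IsIIDMarks.lintegral_prod (hm : IsIIDMarks P ξ η) {g : S → ℝ → ℝ≥0∞}
    (hg : ∀ y, Measurable (g y)) {n : ℕ} (v : Fin (n + 1) → S) :
    ∫⁻ ω, ∏ i : Fin n, g (v i.succ) (ξ i.succ ω) ∂P
      = ∏ i : Fin n, ∫⁻ ω, g (v i.succ) (ξ 1 ω) ∂P := by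
  have hind : iIndepFun (fun (i : Fin n) ω => g (v i.succ) (ξ i.succ ω)) P :=
    (hm.indep.precomp Fin.val_injective).comp (fun i z => g (v i.succ) z.1)
      fun i => (hg _).comp measurable_fst
  rw [lintegral_prod_eq_prod_lintegral_of_indepFun _ _ hind fun i =>
    (hg _).comp (hm.measurable_left _)]
  exact Finset.prod_congr rfl fun i _ => hm.lintegral_comp (hg _) (Nat.succ_pos _)

variable [MeasurableSpace S] [MeasurableSingletonClass S]

lemma measurableSet_path_eq (hX : ∀ n, Measurable (X n)) {n : ℕ} (v : Fin (n + 1) → S) :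
    MeasurableSet {ω | (fun i : Fin (n + 1) => X i ω) = v} :=
  (measurable_pi_lambda (fun ω (i : Fin (n + 1)) => X i ω) fun i => hX i)
    (measurableSet_singleton v)

lemma lintegral_path_indicator_marks (hX : ∀ n, Measurable (X n)) (hm : IsIIDMarks P ξ η)
    (hindX : IndepFun (fun ω (n : ℕ) => X n ω) (fun ω (n : ℕ) => (ξ (n + 1) ω, η (n + 1) ω)) P)
    {Φ : (ℕ → ℝ × ℝ) → ℝ≥0∞} (hΦ : Measurable Φ) {n : ℕ} (v : Fin (n + 1) → S) :
    ∫⁻ ω, {ω | (fun i : Fin (n + 1) => X i ω) = v}.indicator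
        (fun ω => Φ fun k => (ξ (k + 1) ω, η (k + 1) ω)) ω ∂P
      = P {ω | (fun i : Fin (n + 1) => X i ω) = v}
        * ∫⁻ ω, Φ (fun k => (ξ (k + 1) ω, η (k + 1) ω)) ∂P := by
  set C : Set (ℕ → S) := {x | (fun i : Fin (n + 1) => x i) = v}
  have hC : MeasurableSet C :=
    (measurable_pi_lambda (fun (x : ℕ → S) (i : Fin (n + 1)) => x i) fun i =>
      measurable_pi_apply _) (measurableSet_singleton v)
  have hφ : Measurable (C.indicator fun _ => (1 : ℝ≥0∞)) := measurable_const.indicator hC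
  have hmarks : Measurable fun ω (k : ℕ) => (ξ (k + 1) ω, η (k + 1) ω) :=
    measurable_pi_lambda _ fun k => (hm.measurable_left _).prodMk (hm.measurable_right _)
  calc ∫⁻ ω, {ω | (fun i : Fin (n + 1) => X i ω) = v}.indicator
        (fun ω => Φ fun k => (ξ (k + 1) ω, η (k + 1) ω)) ω ∂P
      = ∫⁻ ω, (C.indicator fun _ => 1) (fun k => X k ω)
          * Φ (fun k => (ξ (k + 1) ω, η (k + 1) ω)) ∂P := by
        refine lintegral_congr fun ω => ?_
        by_cases hω : (fun i : Fin (n + 1) => X i ω) = v <;> simp [hω, C]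
    _ = (∫⁻ ω, (C.indicator fun _ => 1) (fun k => X k ω) ∂P)
          * ∫⁻ ω, Φ (fun k => (ξ (k + 1) ω, η (k + 1) ω)) ∂P :=
        lintegral_mul_eq_lintegral_mul_lintegral_of_indepFun''
          (hφ.comp (measurable_pi_lambda _ hX)).aemeasurable (hΦ.comp hmarks).aemeasurable
          (hindX.comp hφ hΦ)
    _ = _ := by
        rw [← lintegral_indicator_one (measurableSet_path_eq hX v)]
        rfl

variable [Fintype S] [DecidableEq S] [IsProbabilityMeasure P]

theorem lintegral_path_mul_prod_marks (hX : ∀ n, Measurable (X n)) (hXK : IsMarkovChain P K x0 X)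
    (hm : IsIIDMarks P ξ η)
    (hindX : IndepFun (fun ω (n : ℕ) => X n ω) (fun ω (n : ℕ) => (ξ (n + 1) ω, η (n + 1) ω)) P)
    {g : S → ℝ → ℝ≥0∞} (hg : ∀ y, Measurable (g y)) {n : ℕ} (F : (Fin (n + 1) → S) → ℝ≥0∞) :
    ∫⁻ ω, F (fun i => X i ω) * ∏ i : Fin n, g (X i.succ ω) (ξ i.succ ω) ∂P
      = ∑ v, if v 0 = x0 then
          F v * pathWeight (tiltedKernel K fun y => ∫⁻ ω, g y (ξ 1 ω) ∂P) v else 0 := by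
  set cyl : (Fin (n + 1) → S) → Set Ω := fun v => {ω | (fun i : Fin (n + 1) => X i ω) = v}
  set G : (Fin (n + 1) → S) → (ℕ → ℝ × ℝ) → ℝ≥0∞ := fun v z => ∏ i : Fin n, g (v i.succ) (z i).1
  have hG : ∀ v, Measurable (G v) := fun v => Finset.measurable_prod _ fun i _ =>
    (hg _).comp (measurable_fst.comp (measurable_pi_apply _))
  have hmeas : ∀ v, Measurable ((cyl v).indicator fun ω =>
      G v fun k => (ξ (k + 1) ω, η (k + 1) ω)) := fun v =>
    ((hG v).comp (measurable_pi_lambda _ fun k =>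
      (hm.measurable_left _).prodMk (hm.measurable_right _))).indicator (measurableSet_path_eq hX v)
  have hsplit : ∀ ω, F (fun i => X i ω) * ∏ i : Fin n, g (X i.succ ω) (ξ i.succ ω)
      = ∑ v, F v * (cyl v).indicator (fun ω => G v fun k => (ξ (k + 1) ω, η (k + 1) ω)) ω := by
    intro ω
    rw [eq_comm, Finset.sum_eq_single fun i : Fin (n + 1) => X i ω]
    · simp [cyl, G]
    · intro v _ hv
      simp [cyl, Ne.symm hv]
    · simp
  rw [lintegral_congr hsplit, lintegral_finsetSum _ fun v _ => (hmeas v).const_mul _]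
  refine Finset.sum_congr rfl fun v _ => ?_
  rw [lintegral_const_mul _ (hmeas v), lintegral_path_indicator_marks hX hm hindX (hG v),
    hXK.measure_path_eq, show (∫⁻ ω, G v (fun k => (ξ (k + 1) ω, η (k + 1) ω)) ∂P)
      = ∫⁻ ω, ∏ i : Fin n, g (v i.succ) (ξ i.succ ω) ∂P from rfl,
    hm.lintegral_prod hg, pathWeight_tiltedKernel K fun y => ∫⁻ ω, g y (ξ 1 ω) ∂P]
  split_ifs <;> simp only [one_mul, zero_mul, mul_zero]

lemma IsMarkovChain.measure_avoids (hX : ∀ n, Measurable (X n)) (hXK : IsMarkovChain P K x0 X)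
    (n : ℕ) :
    P {ω | Avoids x0 fun i : Fin (n + 1) => X i ω}
      = (taboo x0 (tiltedKernel K 1) ^ n *ᵥ 1) x0 := by
  set path : Ω → Fin (n + 1) → S := fun ω i => X i ω
  calc P {ω | Avoids x0 (path ω)}
      = P (path ⁻¹' ↑(Finset.univ.filter (Avoids (n := n) x0))) := by simp [Set.preimage]
    _ = ∑ v ∈ Finset.univ.filter (Avoids x0), P {ω | path ω = v} :=
        (sum_measure_preimage_singleton _ fun v _ => measurableSet_path_eq hX v).symm
    _ = ∑ v, if v 0 = x0 ∧ Avoids x0 v then pathWeight (tiltedKernel K 1) v else 0 := by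
        rw [Finset.sum_filter]
        refine Finset.sum_congr rfl fun v _ => ?_
        rw [hXK.measure_path_eq]
        split_ifs <;> simp_all
    _ = _ := sum_pathWeight_avoids x0 _ n x0

lemma IsMarkovChain.ae_exists_return (hX : ∀ n, Measurable (X n)) (hXK : IsMarkovChain P K x0 X)
    (hKnn : ∀ x y, 0 ≤ K x y) (hKrow : ∀ x, ∑ y, K x y = 1)
    (hKirr : ∀ x y, ∃ n : ℕ, 0 < (K ^ n) x y) :
    ∀ᵐ ω ∂P, ∃ j, 1 ≤ j ∧ X j ω = x0 := by
  have hK : tiltedKernel K 1 *ᵥ 1 = 1 := by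
    funext x
    simp only [mulVec, dotProduct, tiltedKernel, of_apply, Pi.one_apply, mul_one]
    rw [← ENNReal.ofReal_sum_of_nonneg fun y _ => hKnn x y, hKrow, ENNReal.ofReal_one]
  have hacc := exists_pow_succ_apply_ne_zero hKnn hKrow hKirr (M := tiltedKernel K 1)
    fun x y h => by simp [tiltedKernel, h]
  simp only [ae_iff, not_exists, not_and]
  refine le_antisymm (ge_of_tendsto' (tendsto_taboo_pow_mulVec_one_nhds_zero hK (hacc · x0) x0)
    fun n => ?_) zero_le
  rw [← hXK.measure_avoids hX n]
  exact measure_mono fun ω hω i => hω _ (Nat.succ_pos _)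

theorem lintegral_exp_sum_returnTime (hX : ∀ n, Measurable (X n)) (hXK : IsMarkovChain P K x0 X)
    (hm : IsIIDMarks P ξ η)
    (hindX : IndepFun (fun ω (n : ℕ) => X n ω) (fun ω (n : ℕ) => (ξ (n + 1) ω, η (n + 1) ω)) P)
    (hKnn : ∀ x y, 0 ≤ K x y) (hKrow : ∀ x, ∑ y, K x y = 1)
    (hKirr : ∀ x y, ∃ n : ℕ, 0 < (K ^ n) x y) {γ : S → ℝ → ℝ} (hγ : ∀ x, Measurable (γ x))
    (θ : ℝ) {mgf : S → ℝ≥0∞}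
    (hmgf : ∀ y, ∫⁻ ω, ENNReal.ofReal (exp (θ * γ y (ξ 1 ω))) ∂P = mgf y) :
    ∫⁻ ω, ENNReal.ofReal (exp (θ * ∑ k ∈ Finset.range (sInf {j | 1 ≤ j ∧ X j ω = x0}),
        γ (X (k + 1) ω) (ξ (k + 1) ω))) ∂P
      = ∑' k, (taboo x0 (tiltedKernel K mgf) ^ k * tiltedKernel K mgf) x0 x0 := by
  obtain rfl : (fun y => ∫⁻ ω, ENNReal.ofReal (exp (θ * γ y (ξ 1 ω))) ∂P) = mgf := funext hmgf
  set g : S → ℝ → ℝ≥0∞ := fun y r => ENNReal.ofReal (exp (θ * γ y r))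
  have hg : ∀ y, Measurable (g y) := fun y =>
    ENNReal.measurable_ofReal.comp (measurable_exp.comp ((hγ y).const_mul θ))
  set term : ℕ → Ω → ℝ≥0∞ := fun k ω =>
    (if Avoids x0 (fun i : Fin (k + 1) => X i ω) ∧ X (k + 1) ω = x0 then 1 else 0)
      * ∏ i : Fin (k + 1), g (X i.succ ω) (ξ i.succ ω)
  have hterm : ∀ k, Measurable (term k) := fun k =>
    ((Measurable.of_discrete (f := fun v : Fin (k + 2) → S =>
        if Avoids x0 (Fin.init v) ∧ v (Fin.last _) = x0 then (1 : ℝ≥0∞) else 0)).comp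
      (measurable_pi_lambda _ fun i => hX i)).mul
    (Finset.measurable_prod _ fun i _ =>
      (measurable_from_prod_countable_right (f := fun p : S × ℝ => g p.1 p.2) hg).comp
        ((hX _).prodMk (hm.measurable_left _)))
  have hnever : ∀ᵐ ω ∂P, (if sInf {j | 1 ≤ j ∧ X j ω = x0} = 0 then 1 else 0 : ℝ≥0∞) = 0 := by
    filter_upwards [hXK.ae_exists_return hX hKnn hKrow hKirr] with ω ⟨j, hj, hXj⟩
    exact if_neg fun h => (sInf_return_eq_zero_iff _ x0).1 h j hj hXj
  have hsplit : ∀ ω, ENNReal.ofReal (exp (θ * ∑ k ∈ Finset.range (sInf {j | 1 ≤ j ∧ X j ω = x0}),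
      γ (X (k + 1) ω) (ξ (k + 1) ω)))
      = (if sInf {j | 1 ≤ j ∧ X j ω = x0} = 0 then 1 else 0) + ∑' k, term k ω := fun ω => by
    rw [Finset.mul_sum]
    exact ofReal_exp_sum_returnTime (fun j => X j ω) x0 fun j => θ * γ (X j ω) (ξ j ω)
  rw [lintegral_congr hsplit, lintegral_add_right _ (Measurable.tsum hterm),
    lintegral_congr_ae hnever, lintegral_zero, zero_add,
    lintegral_tsum fun k => (hterm k).aemeasurable]
  refine tsum_congr fun k => ?_
  rw [← sum_pathWeight_firstReturn]
  refine (lintegral_path_mul_prod_marks hX hXK hm hindX hg fun v : Fin (k + 2) → S =>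
    if Avoids x0 (Fin.init v) ∧ v (Fin.last _) = x0 then 1 else 0).trans
    (Finset.sum_congr rfl fun v _ => ?_)
  split_ifs <;> simp_all [g]

end MarkovChainWithMarks

theorem stmt_2_general
    {S : Type} [Fintype S] [DecidableEq S]
    [MeasurableSpace S] [MeasurableSingletonClass S]
    {Ω : Type} [mΩ : MeasurableSpace Ω] (P : Measure Ω) [IsProbabilityMeasure P]
    -- the transition matrix: stochastic and irreducible
    (K : Matrix S S ℝ) (hKnn : ∀ x y, 0 ≤ K x y) (hKrow : ∀ x, ∑ y, K x y = 1)
    (hKirr : ∀ x y, ∃ n : ℕ, 0 < (K ^ n) x y)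
    -- the modulating Markov chain, started at x0, and the i.i.d. drivers
    (X : ℕ → Ω → S) (hXmeas : ∀ n, Measurable (X n))
    (ξ η : ℕ → Ω → ℝ) (hξmeas : ∀ n, Measurable (ξ n)) (hηmeas : ∀ n, Measurable (η n))
    (x0 : S) (hX0 : ∀ᵐ ω ∂P, X 0 ω = x0)
    (hMarkov : ∀ (n : ℕ) (x : ℕ → S),
      P {ω | ∀ i ≤ n + 1, X i ω = x i}
        = P {ω | ∀ i ≤ n, X i ω = x i} * ENNReal.ofReal (K (x n) (x (n + 1))))
    (hiid : ∀ n : ℕ, 1 ≤ n →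
      Measure.map (fun ω => (ξ n ω, η n ω)) P = Measure.map (fun ω => (ξ 1 ω, η 1 ω)) P)
    (hindep : iIndepFun
      (fun (n : ℕ) (ω : Ω) => (ξ (n + 1) ω, η (n + 1) ω)) P)
    (hindX : IndepFun (fun ω (n : ℕ) => X n ω) (fun ω (n : ℕ) => (ξ (n + 1) ω, η (n + 1) ω)) P)
    -- discount and reward rate functions (rewards nonnegative)
    (γ : S → ℝ → ℝ) (hγm : ∀ x, Measurable (γ x))
    -- the accumulated rate process S_n = Σ_{k=1}^n γ(X_k, ξ_k), S_0 = 0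
    (Sp : ℕ → Ω → ℝ)
    (hSp : ∀ n ω, Sp n ω = ∑ k ∈ Finset.range n, γ (X (k + 1) ω) (ξ (k + 1) ω))
    -- Perron-Frobenius eigenfunctions u_θ > 0 and eigenvalue exp(ψ(θ)):
    -- u_θ(x) = E_x[exp(θ γ(X₁,ξ₁) - ψ(θ)) u_θ(X₁)] whenever the mgf is finite
    (u : ℝ → S → ℝ) (ψ : ℝ → ℝ) (hupos : ∀ θ x, 0 < u θ x)
    (heig : ∀ θ : ℝ, (∀ x, Integrable (fun ω => exp (θ * γ x (ξ 1 ω))) P) →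
      ∀ x : S, u θ x = ∑ y, K x y * ((∫ ω, exp (θ * γ y (ξ 1 ω)) ∂P) * exp (-ψ θ) * u θ y))
    -- Assumption 2 (Cramér): ψ(θ*) = 0 for some θ* > 0 and ψ(θ) < ∞ for some θ > θ*
    (θs : ℝ) (hθspos : 0 < θs) (hψ0 : ψ θs = 0)
    (hA2 : ∃ θp > θs, ∀ θ ∈ Set.Icc (0 : ℝ) θp,
      ∀ x, Integrable (fun ω => exp (θ * γ x (ξ 1 ω))) P)
    :
    ∫⁻ ω, ENNReal.ofReal (exp (θs * Sp (sInf {k : ℕ | 1 ≤ k ∧ X k ω = x0}) ω)) ∂P = 1 := by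
  obtain ⟨θp, hθp, hmgf⟩ := hA2
  have hint := hmgf θs ⟨hθspos.le, hθp.le⟩
  set m : S → ℝ := fun y => ∫ ω, exp (θs * γ y (ξ 1 ω)) ∂P
  have hmpos : ∀ y, 0 < m y := fun y => integral_exp_pos (hint y)
  simp only [hSp]
  rw [lintegral_exp_sum_returnTime hXmeas ⟨hX0, hMarkov⟩ ⟨hξmeas, hηmeas, hiid, hindep⟩ hindX hKnn
    hKrow hKirr hγm θs fun y => (ofReal_integral_eq_lintegral_ofReal (hint y)
      (ae_of_all _ fun ω => (exp_pos _).le)).symm]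
  refine Matrix.tsum_taboo_pow_mul_of_mulVec_eq_self (w := fun x => ENNReal.ofReal (u θs x))
    (fun x => by simp [hupos θs x]) (fun _ => ENNReal.ofReal_ne_top) ?_ fun y =>
      Matrix.exists_pow_succ_apply_ne_zero hKnn hKrow hKirr
        (fun a b hab => by simpa [Matrix.tiltedKernel, hab] using hmpos b) y x0
  rw [Matrix.tiltedKernel_ofReal_mulVec_ofReal hKnn (fun y => (hmpos y).le)
    fun y => (hupos θs y).le]
  funext x
  simp [heig θs hint x, hψ0, m]

/-- Under Assumptions 1 and 2, the Cramér root `θ*` satisfies `E_{x₀}[exp(θ* S_{τ(x₀)})] = 1`,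
where `τ(x₀) = inf{k ≥ 1 : X_k = x₀}` is the return time to the initial state. -/
theorem stmt_2
    {S : Type} [Fintype S] [DecidableEq S] [Nonempty S]
    [MeasurableSpace S] [MeasurableSingletonClass S]
    {Ω : Type} [mΩ : MeasurableSpace Ω] (P : Measure Ω) [IsProbabilityMeasure P]
    -- the transition matrix: stochastic and irreducible
    (K : Matrix S S ℝ) (hKnn : ∀ x y, 0 ≤ K x y) (hKrow : ∀ x, ∑ y, K x y = 1)
    (hKirr : ∀ x y, ∃ n : ℕ, 0 < (K ^ n) x y)
    -- the modulating Markov chain, started at x0, and the i.i.d. drivers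
    (X : ℕ → Ω → S) (hXmeas : ∀ n, Measurable (X n))
    (ξ η : ℕ → Ω → ℝ) (hξmeas : ∀ n, Measurable (ξ n)) (hηmeas : ∀ n, Measurable (η n))
    (x0 : S) (hX0 : ∀ᵐ ω ∂P, X 0 ω = x0)
    (hMarkov : ∀ (n : ℕ) (x : ℕ → S),
      P {ω | ∀ i ≤ n + 1, X i ω = x i}
        = P {ω | ∀ i ≤ n, X i ω = x i} * ENNReal.ofReal (K (x n) (x (n + 1))))
    (hiid : ∀ n : ℕ, 1 ≤ n →
      Measure.map (fun ω => (ξ n ω, η n ω)) P = Measure.map (fun ω => (ξ 1 ω, η 1 ω)) P)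
    (hindep : iIndepFun
      (fun (n : ℕ) (ω : Ω) => (ξ (n + 1) ω, η (n + 1) ω)) P)
    (hindX : IndepFun (fun ω (n : ℕ) => X n ω) (fun ω (n : ℕ) => (ξ (n + 1) ω, η (n + 1) ω)) P)
    -- discount and reward rate functions (rewards nonnegative)
    (γ lam : S → ℝ → ℝ) (hγm : ∀ x, Measurable (γ x)) (hlamm : ∀ x, Measurable (lam x))
    (hlamnn : ∀ x v, 0 ≤ lam x v)
    -- the accumulated rate process S_n = Σ_{k=1}^n γ(X_k, ξ_k), S_0 = 0
    (Sp : ℕ → Ω → ℝ)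
    (hSp : ∀ n ω, Sp n ω = ∑ k ∈ Finset.range n, γ (X (k + 1) ω) (ξ (k + 1) ω))
    -- Perron-Frobenius eigenfunctions u_θ > 0 and eigenvalue exp(ψ(θ)):
    -- u_θ(x) = E_x[exp(θ γ(X₁,ξ₁) - ψ(θ)) u_θ(X₁)] whenever the mgf is finite
    (u : ℝ → S → ℝ) (ψ : ℝ → ℝ) (hupos : ∀ θ x, 0 < u θ x)
    (heig : ∀ θ : ℝ, (∀ x, Integrable (fun ω => exp (θ * γ x (ξ 1 ω))) P) →
      ∀ x : S, u θ x = ∑ y, K x y * ((∫ ω, exp (θ * γ y (ξ 1 ω)) ∂P) * exp (-ψ θ) * u θ y))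
    -- Assumption 1: finite exponential moments in a neighborhood of the origin
    (hA1 : ∃ ε > (0 : ℝ), ∀ θ : ℝ, |θ| ≤ ε →
      ∀ x, Integrable (fun ω => exp (θ * γ x (ξ 1 ω))) P)
    -- Assumption 2 (Cramér): ψ(θ*) = 0 for some θ* > 0 and ψ(θ) < ∞ for some θ > θ*
    (θs : ℝ) (hθspos : 0 < θs) (hψ0 : ψ θs = 0)
    (hA2 : ∃ θp > θs, ∀ θ ∈ Set.Icc (0 : ℝ) θp,
      ∀ x, Integrable (fun ω => exp (θ * γ x (ξ 1 ω))) P)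
    :
    ∫⁻ ω, ENNReal.ofReal (exp (θs * Sp (sInf {k : ℕ | 1 ≤ k ∧ X k ω = x0}) ω)) ∂P = 1 :=
  stmt_2_general (mΩ := mΩ) P K hKnn hKrow hKirr X hXmeas ξ η hξmeas hηmeas x0 hX0 hMarkov hiid
    hindep hindX γ hγm Sp hSp u ψ hupos heig θs hθspos hψ0 hA2
end

section
/- Under Assumptions 1 and 2, let σ(y)=inf{n≥0 : S_n > y}. There exists a constant c ∈ (0,∞) such that for all y ≥ 0, E_{x_0}[exp(−θ* S_{σ(y)}) · (u_{θ*}(x_0)/u_{θ*}(X_{σ(y)})) · 1(σ(y)<∞)] ≤ c·exp(−2θ* y). (This quantity equals the second moment of the exponentially tilted importance sampling estimator Z′_y of P_{x_0}(max_{n≥0} S_n > y), so this estimator is strongly efficient.) -/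
/-
On the event `σ(y) < ∞` we have `S_σ > y`, so the integrand is at most
`e^{-θ* y} u(x₀) / min u`, and it suffices to prove the Lundberg bound
`P(σ(y) < ∞) ≤ (u(x₀) / min u) e^{-θ* y}`. Since `ψ(θ*) = 0`, the eigenvalue relation makes
`W_n = exp(θ* S_n) u(X_n)` mean-preserving against every functional of the past of the chain
and of the drivers (independence of the chain from the i.i.d. drivers lets one integrate the
new driver out first, and the Markov property then averages over the next state). Hence the
expected values of `W` on the exit events `{S_k ≤ y for k ≤ n, S_{n+1} > y}`, on which
`W_{n+1} ≥ e^{θ* y} min u`, add up to at most `W_0 = u(x₀)`.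
-/
open MeasureTheory ProbabilityTheory Real Filter
open scoped ENNReal NNReal

section Independence

variable {Ω β γ : Type*} [MeasurableSpace Ω] [MeasurableSpace β] [MeasurableSpace γ]
  {P : Measure Ω} [IsProbabilityMeasure P]

theorem lintegral_comp_eq_lintegral_lintegral_of_indepFun {Y : Ω → β} {Z : Ω → γ}
    (hY : Measurable Y) (hZ : Measurable Z) (hYZ : IndepFun Y Z P) {H : β → γ → ℝ≥0∞}
    (hH : Measurable (Function.uncurry H)) :
    ∫⁻ ω, H (Y ω) (Z ω) ∂P = ∫⁻ ω, ∫⁻ ω', H (Y ω) (Z ω') ∂P ∂P := by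
  rw [indepFun_iff_map_prod_eq_prod_map_map hY.aemeasurable hZ.aemeasurable] at hYZ
  calc ∫⁻ ω, H (Y ω) (Z ω) ∂P
      = ∫⁻ p, Function.uncurry H p ∂(P.map fun ω => (Y ω, Z ω)) :=
        (lintegral_map hH (hY.prodMk hZ)).symm
    _ = ∫⁻ b, ∫⁻ c, H b c ∂(P.map Z) ∂(P.map Y) := by
        rw [hYZ, lintegral_prod _ hH.aemeasurable]; rfl
    _ = ∫⁻ ω, ∫⁻ ω', H (Y ω) (Z ω') ∂P ∂P := by
        rw [lintegral_map (f := fun b => ∫⁻ c, H b c ∂(P.map Z)) hH.lintegral_prod_right' hY]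
        exact lintegral_congr fun ω => lintegral_map (hH.comp measurable_prodMk_left) hZ

theorem lintegral_mul_eq_mul_lintegral_of_iIndepFun {D : ℕ → Ω → β} (hD : ∀ n, Measurable (D n))
    (hDi : iIndepFun D P) (n : ℕ) {F : (ℕ → β) → ℝ≥0∞} (hF : Measurable F)
    (hFloc : ∀ v v', (∀ j < n, v j = v' j) → F v = F v') {g : β → ℝ≥0∞} (hg : Measurable g) :
    ∫⁻ ω, F (D · ω) * g (D n ω) ∂P = (∫⁻ ω, F (D · ω) ∂P) * ∫⁻ ω, g (D n ω) ∂P := by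
  obtain ⟨ω₀⟩ := nonempty_of_isProbabilityMeasure P
  let F' : (Finset.range n → β) → ℝ≥0∞ := fun w =>
    F fun j => if h : j ∈ Finset.range n then w ⟨j, h⟩ else D j ω₀
  have hF' : Measurable F' := by
    refine hF.comp (measurable_pi_lambda _ fun j => ?_)
    split_ifs
    exacts [measurable_pi_apply _, measurable_const]
  have hF'D : ∀ ω, F' (fun i => D i ω) = F (D · ω) := fun ω =>
    hFloc _ _ fun j hj => dif_pos (Finset.mem_range.2 hj)
  have hind := (hDi.indepFun_finset (Finset.range n) {n} (by simp) hD).comp hF'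
    (hg.comp (measurable_pi_apply ⟨n, Finset.mem_singleton_self n⟩))
  have h := lintegral_mul_eq_lintegral_mul_lintegral_of_indepFun''
    (hF'.comp (measurable_pi_lambda _ fun i => hD i)).aemeasurable
    (hg.comp (hD n)).aemeasurable hind
  simpa only [Function.comp_def, hF'D] using h

end Independence

theorem mul_measure_diff_iInter_le {Ω : Type*} [MeasurableSpace Ω] {μ : Measure Ω}
    {E : ℕ → Set Ω} (hE : ∀ n, MeasurableSet (E n)) (hEanti : Antitone E)
    {W : ℕ → Ω → ℝ≥0∞} (hW : ∀ n, ∫⁻ ω in E n, W (n + 1) ω ∂μ = ∫⁻ ω in E n, W n ω ∂μ)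
    {c : ℝ≥0∞} (hc : ∀ n, ∀ ω ∈ E n \ E (n + 1), c ≤ W (n + 1) ω) :
    c * μ (E 0 \ ⋂ n, E n) ≤ ∫⁻ ω in E 0, W 0 ω ∂μ := by
  have htelescope : ∀ N, ∑ k ∈ Finset.range N, ∫⁻ ω in E k \ E (k + 1), W (k + 1) ω ∂μ
      + ∫⁻ ω in E N, W N ω ∂μ = ∫⁻ ω in E 0, W 0 ω ∂μ := by
    intro N
    induction N with
    | zero => simp
    | succ N ih =>
      rw [← ih, Finset.sum_range_succ, add_assoc, ← hW N,
        ← lintegral_inter_add_sdiff _ (E N) (hE (N + 1)), Set.inter_eq_right.2 (hEanti N.le_succ),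
        add_comm (∫⁻ ω in E (N + 1), _ ∂μ)]
  have hcover : E 0 \ ⋂ n, E n ⊆ ⋃ n, E n \ E (n + 1) := by
    classical
    rintro ω ⟨h0, hnot⟩
    have hex : ∃ N, ω ∉ E N := by simpa using hnot
    have hN0 : Nat.find hex ≠ 0 := fun h => Nat.find_spec hex (h ▸ h0)
    obtain ⟨k, hk⟩ := Nat.exists_eq_succ_of_ne_zero hN0
    refine Set.mem_iUnion.2 ⟨k, not_not.1 (Nat.find_min hex ?_), ?_⟩
    · omega
    · rw [← Nat.succ_eq_add_one, ← hk]; exact Nat.find_spec hex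
  calc c * μ (E 0 \ ⋂ n, E n)
      ≤ c * ∑' n, μ (E n \ E (n + 1)) := by
        gcongr; exact (measure_mono hcover).trans (measure_iUnion_le _)
    _ = ∑' n, ∫⁻ _ in E n \ E (n + 1), c ∂μ := by
        simp only [setLIntegral_const, ENNReal.tsum_mul_left]
    _ ≤ ∑' n, ∫⁻ ω in E n \ E (n + 1), W (n + 1) ω ∂μ :=
        ENNReal.tsum_le_tsum fun n => setLIntegral_mono' ((hE n).diff (hE (n + 1))) (hc n)
    _ ≤ ∫⁻ ω in E 0, W 0 ω ∂μ :=
        ENNReal.tsum_le_of_sum_range_le fun N => le_self_add.trans (htelescope N).le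

theorem setLIntegral_exp_neg_firstPassage_le {Ω S : Type*} [MeasurableSpace Ω] {P : Measure Ω}
    {Sp : ℕ → Ω → ℝ} (hSp : ∀ n, Measurable (Sp n)) (X : ℕ → Ω → S) {θ : ℝ} (hθ : 0 ≤ θ)
    {u : S → ℝ} {a c : ℝ} (ha : 0 ≤ a) (hc : 0 < c) (hcu : ∀ z, c ≤ u z) (y : ℝ) :
    ∫⁻ ω in {ω | ∃ n, y < Sp n ω},
        ENNReal.ofReal (exp (-(θ * Sp (sInf {n | y < Sp n ω}) ω)) *
          (a / u (X (sInf {n | y < Sp n ω}) ω))) ∂P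
      ≤ ENNReal.ofReal (exp (-(θ * y)) * (a / c)) * P {ω | ∃ n, y < Sp n ω} := by
  have hA : MeasurableSet {ω | ∃ n, y < Sp n ω} := by
    simp only [Set.ofPred_exists]
    exact MeasurableSet.iUnion fun n => measurableSet_lt measurable_const (hSp n)
  rw [← setLIntegral_const]
  refine setLIntegral_mono' hA fun ω hω => ENNReal.ofReal_le_ofReal ?_
  have hpass : y < Sp (sInf {n | y < Sp n ω}) ω := Nat.sInf_mem hω
  exact mul_le_mul (exp_le_exp.2 (by gcongr)) (div_le_div_of_nonneg_left ha hc (hcu _))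
    (div_nonneg ha (hc.le.trans (hcu _))) (exp_nonneg _)

section MarkovChain

def padLast {S : Type*} {m : ℕ} (q : Fin (m + 1) → S) : ℕ → S := fun i => q (Fin.clamp i m)

lemma padLast_of_le {S : Type*} {m : ℕ} (q : Fin (m + 1) → S) {i : ℕ} (hi : i ≤ m) :
    padLast q i = q ⟨i, Nat.lt_succ_of_le hi⟩ := by
  simp [padLast, Fin.clamp, hi]

lemma padLast_snoc_of_le {S : Type*} {m : ℕ} (q : Fin (m + 1) → S) (z : S) {i : ℕ}
    (hi : i ≤ m) : padLast (Fin.snoc q z : Fin (m + 2) → S) i = padLast q i := by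
  rw [padLast_of_le _ (by omega), padLast_of_le _ hi]
  exact Fin.snoc_castSucc (α := fun _ => S) (p := q) (x := z) ⟨i, _⟩

lemma padLast_snoc_last {S : Type*} {m : ℕ} (q : Fin (m + 1) → S) (z : S) :
    padLast (Fin.snoc q z : Fin (m + 2) → S) (m + 1) = z := by
  rw [padLast_of_le _ le_rfl]
  exact Fin.snoc_last (α := fun _ => S) (p := q) z

variable {Ω S : Type*} [MeasurableSpace Ω] {P : Measure Ω} {X : ℕ → Ω → S}

def HasTransitionMatrix (P : Measure Ω) (X : ℕ → Ω → S) (K : Matrix S S ℝ) : Prop :=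
  ∀ (n : ℕ) (x : ℕ → S), P {ω | ∀ i ≤ n + 1, X i ω = x i}
    = P {ω | ∀ i ≤ n, X i ω = x i} * ENNReal.ofReal (K (x n) (x (n + 1)))

lemma HasTransitionMatrix.measure_cylinder_snoc {K : Matrix S S ℝ}
    (hM : HasTransitionMatrix P X K) {n : ℕ} (q : Fin (n + 1) → S) (z : S) :
    P {ω | ∀ i ≤ n + 1, X i ω = padLast (Fin.snoc q z : Fin (n + 2) → S) i}
      = P {ω | ∀ i ≤ n, X i ω = padLast q i} * ENNReal.ofReal (K (padLast q n) z) := by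
  rw [hM, padLast_snoc_of_le q z le_rfl, padLast_snoc_last]
  congr 2
  ext ω
  exact forall₂_congr fun i hi => by rw [padLast_snoc_of_le q z hi]

variable [MeasurableSpace S] [MeasurableSingletonClass S]

lemma measurableSet_cylinder (hX : ∀ n, Measurable (X n)) (m : ℕ) (x : ℕ → S) :
    MeasurableSet {ω | ∀ i ≤ m, X i ω = x i} := by
  simp only [Set.ofPred_forall]
  exact MeasurableSet.iInter fun i => MeasurableSet.iInter fun _ =>
    hX i (measurableSet_singleton _)

variable [Fintype S]

theorem lintegral_eq_sum_cylinder (hX : ∀ n, Measurable (X n)) (m : ℕ)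
    {f : (ℕ → S) → ℝ≥0∞} (hf : ∀ x x', (∀ i ≤ m, x i = x' i) → f x = f x') :
    ∫⁻ ω, f (X · ω) ∂P
      = ∑ q : Fin (m + 1) → S, f (padLast q) * P {ω | ∀ i ≤ m, X i ω = padLast q i} := by
  set C : (Fin (m + 1) → S) → Set Ω := fun q => {ω | ∀ i ≤ m, X i ω = padLast q i}
  have hC : ∀ q, MeasurableSet (C q) := fun q => measurableSet_cylinder hX m _
  have hdisj : Pairwise (Function.onFun Disjoint C) := by
    refine fun q q' hne => Set.disjoint_left.2 fun ω hq hq' => hne (funext fun i => ?_)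
    rw [← padLast_of_le q (Nat.lt_succ_iff.1 i.2), ← padLast_of_le q' (Nat.lt_succ_iff.1 i.2),
      ← hq i (Nat.lt_succ_iff.1 i.2), hq' i (Nat.lt_succ_iff.1 i.2)]
  have hcover : (⋃ q, C q) = Set.univ := Set.eq_univ_of_forall fun ω =>
    Set.mem_iUnion.2 ⟨fun i => X i ω, fun i hi => by rw [padLast_of_le _ hi]⟩
  rw [← setLIntegral_univ, ← hcover, lintegral_iUnion hC hdisj, tsum_fintype]
  refine Finset.sum_congr rfl fun q _ => ?_
  rw [setLIntegral_congr_fun (hC q) fun ω hω => hf _ _ hω, setLIntegral_const]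

theorem HasTransitionMatrix.lintegral_mul_succ {K : Matrix S S ℝ}
    (hM : HasTransitionMatrix P X K) (hX : ∀ n, Measurable (X n)) (n : ℕ)
    {A : (ℕ → S) → ℝ≥0∞} (hA : ∀ x x', (∀ i ≤ n, x i = x' i) → A x = A x') (B : S → ℝ≥0∞) :
    ∫⁻ ω, A (X · ω) * B (X (n + 1) ω) ∂P
      = ∫⁻ ω, A (X · ω) * ∑ z, ENNReal.ofReal (K (X n ω) z) * B z ∂P := by
  rw [lintegral_eq_sum_cylinder hX (n + 1) (f := fun x => A x * B (x (n + 1)))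
      fun x x' h => by rw [hA x x' fun i hi => h i (by omega), h (n + 1) le_rfl],
    lintegral_eq_sum_cylinder hX n (f := fun x => A x * ∑ z, ENNReal.ofReal (K (x n) z) * B z)
      fun x x' h => by rw [hA x x' h, h n le_rfl],
    ← (Fin.snocEquiv fun _ => S).sum_comp, Fintype.sum_prod_type, Finset.sum_comm]
  refine Finset.sum_congr rfl fun q _ => ?_
  rw [Finset.mul_sum, Finset.sum_mul]
  refine Finset.sum_congr rfl fun z _ => ?_
  change A (padLast (Fin.snoc q z : Fin (n + 2) → S)) * B (padLast (Fin.snoc q z) (n + 1))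
    * P {ω | ∀ i ≤ n + 1, X i ω = padLast (Fin.snoc q z : Fin (n + 2) → S) i} = _
  rw [hM.measure_cylinder_snoc, padLast_snoc_last,
    hA _ (padLast q) fun i hi => padLast_snoc_of_le q z hi]
  ring

end MarkovChain

section MarkovAdditive

variable {Ω S α : Type*} [MeasurableSpace Ω] [Fintype S] [MeasurableSpace S]
  [MeasurableSingletonClass S] [MeasurableSpace α] {P : Measure Ω} [IsProbabilityMeasure P]
  {X : ℕ → Ω → S} {D : ℕ → Ω → α} {K : Matrix S S ℝ}

theorem HasTransitionMatrix.lintegral_mul_succ_of_indep (hM : HasTransitionMatrix P X K)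
    (hX : ∀ n, Measurable (X n)) (hD : ∀ n, Measurable (D n))
    (hXD : IndepFun (fun ω n => X n ω) (fun ω n => D n ω) P) (hDi : iIndepFun D P) (n : ℕ)
    {F : (ℕ → S) → (ℕ → α) → ℝ≥0∞} (hF : Measurable (Function.uncurry F))
    (hFloc : ∀ x x' v v', (∀ i ≤ n, x i = x' i) → (∀ j < n, v j = v' j) → F x v = F x' v')
    {φ : S → α → ℝ≥0∞} (hφ : ∀ z, Measurable (φ z)) :
    ∫⁻ ω, F (X · ω) (D · ω) * φ (X (n + 1) ω) (D n ω) ∂P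
      = ∫⁻ ω, F (X · ω) (D · ω) *
          ∑ z, ENNReal.ofReal (K (X n ω) z) * ∫⁻ ω', φ z (D n ω') ∂P ∂P := by
  have hXm : Measurable fun ω n => X n ω := measurable_pi_lambda _ hX
  have hDm : Measurable fun ω n => D n ω := measurable_pi_lambda _ hD
  have hφm : Measurable (Function.uncurry φ) := measurable_from_prod_countable_right hφ
  set c : S → ℝ≥0∞ := fun x => ∑ z, ENNReal.ofReal (K x z) * ∫⁻ ω', φ z (D n ω') ∂P
  calc ∫⁻ ω, F (X · ω) (D · ω) * φ (X (n + 1) ω) (D n ω) ∂P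
      = ∫⁻ ω, ∫⁻ ω', F (X · ω) (D · ω') * φ (X (n + 1) ω) (D n ω') ∂P ∂P :=
        lintegral_comp_eq_lintegral_lintegral_of_indepFun hXm hDm hXD
          (H := fun x v => F x v * φ (x (n + 1)) (v n))
          (hF.mul (hφm.comp (f := fun p : (ℕ → S) × (ℕ → α) => (p.1 (n + 1), p.2 n))
            (by fun_prop)))
    _ = ∫⁻ ω, (∫⁻ ω', F (X · ω) (D · ω') ∂P) * ∫⁻ ω', φ (X (n + 1) ω) (D n ω') ∂P ∂P :=
        lintegral_congr fun ω => lintegral_mul_eq_mul_lintegral_of_iIndepFun hD hDi n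
          (hF.comp measurable_prodMk_left) (fun v v' => hFloc _ _ v v' fun _ _ => rfl) (hφ _)
    _ = ∫⁻ ω, (∫⁻ ω', F (X · ω) (D · ω') ∂P) * c (X n ω) ∂P :=
        hM.lintegral_mul_succ hX n (A := fun x => ∫⁻ ω', F x (D · ω') ∂P)
          (fun x x' h => lintegral_congr fun ω' => hFloc x x' _ _ h fun _ _ => rfl)
          fun z => ∫⁻ ω', φ z (D n ω') ∂P
    _ = ∫⁻ ω, ∫⁻ ω', F (X · ω) (D · ω') * c (X n ω) ∂P ∂P :=
        lintegral_congr fun ω =>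
          (lintegral_mul_const _ ((hF.comp measurable_prodMk_left).comp hDm)).symm
    _ = ∫⁻ ω, F (X · ω) (D · ω) * c (X n ω) ∂P :=
        (lintegral_comp_eq_lintegral_lintegral_of_indepFun hXm hDm hXD
          (H := fun x v => F x v * c (x n))
          (hF.mul ((measurable_of_countable c).comp
            ((measurable_pi_apply _).comp measurable_fst)))).symm

end MarkovAdditive

section Lundberg

variable {S α : Type*}

def pathSum (g : S → α → ℝ) (x : ℕ → S) (v : ℕ → α) (n : ℕ) : ℝ :=
  ∑ k ∈ Finset.range n, g (x (k + 1)) (v k)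

lemma pathSum_congr (g : S → α → ℝ) {x x' : ℕ → S} {v v' : ℕ → α} {n : ℕ}
    (hx : ∀ i ≤ n, x i = x' i) (hv : ∀ j < n, v j = v' j) :
    pathSum g x v n = pathSum g x' v' n :=
  Finset.sum_congr rfl fun k hk => by
    rw [Finset.mem_range] at hk; rw [hx (k + 1) hk, hv k hk]

lemma pathSum_zero (g : S → α → ℝ) (x : ℕ → S) (v : ℕ → α) : pathSum g x v 0 = 0 :=
  Finset.sum_range_zero _

lemma pathSum_succ (g : S → α → ℝ) (x : ℕ → S) (v : ℕ → α) (n : ℕ) :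
    pathSum g x v (n + 1) = pathSum g x v n + g (x (n + 1)) (v n) :=
  Finset.sum_range_succ _ _

lemma measurable_pathSum [MeasurableSpace S] [MeasurableSingletonClass S] [Countable S]
    [MeasurableSpace α] {g : S → α → ℝ} (hg : ∀ z, Measurable (g z)) (n : ℕ) :
    Measurable fun p : (ℕ → S) × (ℕ → α) => pathSum g p.1 p.2 n :=
  Finset.measurable_sum _ fun k _ =>
    (measurable_from_prod_countable_right (f := fun p : S × α => g p.1 p.2) hg).comp
      (f := fun p : (ℕ → S) × (ℕ → α) => (p.1 (k + 1), p.2 k)) (by fun_prop)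

variable {Ω : Type*} [MeasurableSpace Ω] [Fintype S] [MeasurableSpace α] {P : Measure Ω}
  {D : ℕ → Ω → α} {K : Matrix S S ℝ}

lemma sum_ofReal_mul_lintegral_exp_eq_of_eigen (hK : ∀ x z, 0 ≤ K x z) {g : S → α → ℝ}
    (hg : ∀ z, Measurable (g z)) (hlaw : ∀ n, IdentDistrib (D n) (D 0) P P) {θ : ℝ}
    (hint : ∀ z, Integrable (fun ω => exp (θ * g z (D 0 ω))) P) {u : S → ℝ} (hu : ∀ z, 0 ≤ u z)
    (heig : ∀ x, ∑ z, K x z * ((∫ ω, exp (θ * g z (D 0 ω)) ∂P) * u z) = u x) (n : ℕ) (x : S) :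
    ∑ z, ENNReal.ofReal (K x z) * ∫⁻ ω, ENNReal.ofReal (exp (θ * g z (D n ω)) * u z) ∂P
      = ENNReal.ofReal (u x) := by
  have hmgf : ∀ z, ∫⁻ ω, ENNReal.ofReal (exp (θ * g z (D n ω)) * u z) ∂P
      = ENNReal.ofReal ((∫ ω, exp (θ * g z (D 0 ω)) ∂P) * u z) := fun z => by
    refine ((hlaw n).comp (u := fun a => ENNReal.ofReal (exp (θ * g z a) * u z))
      (by fun_prop)).lintegral_eq.trans ?_
    rw [← integral_mul_const, ofReal_integral_eq_lintegral_ofReal ((hint z).mul_const _)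
      (ae_of_all _ fun ω => mul_nonneg (exp_nonneg _) (hu z))]
    rfl
  simp_rw [hmgf, ← ENNReal.ofReal_mul (hK _ _)]
  rw [← ENNReal.ofReal_sum_of_nonneg fun z _ => mul_nonneg (hK _ _)
    (mul_nonneg (integral_nonneg fun _ => exp_nonneg _) (hu z)), heig x]

variable [MeasurableSpace S] [MeasurableSingletonClass S] {X : ℕ → Ω → S}

lemma measurable_pathSum_comp {g : S → α → ℝ} (hg : ∀ z, Measurable (g z))
    (hX : ∀ n, Measurable (X n)) (hD : ∀ n, Measurable (D n)) (n : ℕ) :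
    Measurable fun ω => pathSum g (X · ω) (D · ω) n :=
  (measurable_pathSum hg n).comp ((measurable_pi_lambda _ hX).prodMk (measurable_pi_lambda _ hD))

variable [IsProbabilityMeasure P]

theorem HasTransitionMatrix.setLIntegral_exp_pathSum_succ (hM : HasTransitionMatrix P X K)
    (hX : ∀ n, Measurable (X n)) (hD : ∀ n, Measurable (D n))
    (hXD : IndepFun (fun ω n => X n ω) (fun ω n => D n ω) P) (hDi : iIndepFun D P)
    {g : S → α → ℝ} (hg : ∀ z, Measurable (g z)) {θ : ℝ} {u : S → ℝ}
    (hu : ∀ n x, ∑ z, ENNReal.ofReal (K x z) *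
      ∫⁻ ω, ENNReal.ofReal (exp (θ * g z (D n ω)) * u z) ∂P = ENNReal.ofReal (u x))
    (y : ℝ) (n : ℕ) :
    ∫⁻ ω in {ω | ∀ k ≤ n, pathSum g (X · ω) (D · ω) k ≤ y},
        ENNReal.ofReal (exp (θ * pathSum g (X · ω) (D · ω) (n + 1)) * u (X (n + 1) ω)) ∂P
      = ∫⁻ ω in {ω | ∀ k ≤ n, pathSum g (X · ω) (D · ω) k ≤ y},
        ENNReal.ofReal (exp (θ * pathSum g (X · ω) (D · ω) n) * u (X n ω)) ∂P := by
  set B : Set ((ℕ → S) × (ℕ → α)) := {p | ∀ k ≤ n, pathSum g p.1 p.2 k ≤ y}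
  have hB : MeasurableSet B := by
    simp only [B, Set.ofPred_forall]
    exact MeasurableSet.iInter fun k => MeasurableSet.iInter fun _ =>
      measurableSet_le (measurable_pathSum hg k) measurable_const
  set F : (ℕ → S) → (ℕ → α) → ℝ≥0∞ := fun x v =>
    B.indicator (fun p => ENNReal.ofReal (exp (θ * pathSum g p.1 p.2 n))) (x, v)
  have hF : Measurable (Function.uncurry F) :=
    ((measurable_pathSum hg n).const_mul θ).exp.ennreal_ofReal.indicator hB
  have hFloc : ∀ x x' v v', (∀ i ≤ n, x i = x' i) → (∀ j < n, v j = v' j) → F x v = F x' v' := by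
    intro x x' v v' hx hv
    have h : ∀ k ≤ n, pathSum g x v k = pathSum g x' v' k := fun k hk =>
      pathSum_congr g (fun i hi => hx i (hi.trans hk)) fun j hj => hv j (hj.trans_le hk)
    have hmem : (x, v) ∈ B ↔ (x', v') ∈ B := forall₂_congr fun k hk => by rw [h k hk]
    simp only [F, Set.indicator_apply, hmem, h n le_rfl]
  have hstep := hM.lintegral_mul_succ_of_indep hX hD hXD hDi n hF hFloc
    (φ := fun z a => ENNReal.ofReal (exp (θ * g z a) * u z)) fun z => by fun_prop
  set E := {ω | ∀ k ≤ n, pathSum g (X · ω) (D · ω) k ≤ y}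
  have hE : MeasurableSet E :=
    hB.preimage ((measurable_pi_lambda _ hX).prodMk (measurable_pi_lambda _ hD))
  rw [← lintegral_indicator hE, ← lintegral_indicator hE]
  have hFE : ∀ ω, F (X · ω) (D · ω)
      = E.indicator (fun ω => ENNReal.ofReal (exp (θ * pathSum g (X · ω) (D · ω) n))) ω :=
    fun _ => rfl
  refine (lintegral_congr fun ω => ?_).trans (hstep.trans (lintegral_congr fun ω => ?_)) <;>
    rw [hFE] <;> by_cases hω : ω ∈ E
  · rw [Set.indicator_of_mem hω, Set.indicator_of_mem hω, ← ENNReal.ofReal_mul (exp_nonneg _),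
      pathSum_succ, mul_add, exp_add, mul_assoc]
  · rw [Set.indicator_of_notMem hω, Set.indicator_of_notMem hω, zero_mul]
  · rw [Set.indicator_of_mem hω, Set.indicator_of_mem hω, hu, ← ENNReal.ofReal_mul (exp_nonneg _)]
  · rw [Set.indicator_of_notMem hω, Set.indicator_of_notMem hω, zero_mul]

theorem HasTransitionMatrix.measure_exists_lt_pathSum_le (hM : HasTransitionMatrix P X K)
    (hX : ∀ n, Measurable (X n)) (hD : ∀ n, Measurable (D n))
    (hXD : IndepFun (fun ω n => X n ω) (fun ω n => D n ω) P) (hDi : iIndepFun D P)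
    {g : S → α → ℝ} (hg : ∀ z, Measurable (g z)) {θ : ℝ} (hθ : 0 ≤ θ) {u : S → ℝ}
    (hu : ∀ n x, ∑ z, ENNReal.ofReal (K x z) *
      ∫⁻ ω, ENNReal.ofReal (exp (θ * g z (D n ω)) * u z) ∂P = ENNReal.ofReal (u x))
    {x₀ : S} (hX₀ : ∀ᵐ ω ∂P, X 0 ω = x₀) {c : ℝ} (hc : 0 < c) (hcu : ∀ z, c ≤ u z)
    {y : ℝ} (hy : 0 ≤ y) :
    P {ω | ∃ n, y < pathSum g (X · ω) (D · ω) n} ≤ ENNReal.ofReal (u x₀ / c * exp (-(θ * y))) := by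
  set E : ℕ → Set Ω := fun n => {ω | ∀ k ≤ n, pathSum g (X · ω) (D · ω) k ≤ y}
  have hE : ∀ n, MeasurableSet (E n) := fun n => by
    simp only [E, Set.ofPred_forall]
    exact MeasurableSet.iInter fun k => MeasurableSet.iInter fun _ =>
      measurableSet_le (measurable_pathSum_comp hg hX hD k) measurable_const
  have hexit : ∀ n, ∀ ω ∈ E n \ E (n + 1),
      ENNReal.ofReal (exp (θ * y) * c)
        ≤ ENNReal.ofReal (exp (θ * pathSum g (X · ω) (D · ω) (n + 1)) * u (X (n + 1) ω)) := by
    rintro n ω ⟨hn, hn1⟩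
    have hlt : y < pathSum g (X · ω) (D · ω) (n + 1) := by
      by_contra! hle
      exact hn1 fun k hk => (Nat.le_succ_iff.1 hk).elim (hn k) fun h => h ▸ hle
    exact ENNReal.ofReal_le_ofReal (mul_le_mul (exp_le_exp.2 (by gcongr)) (hcu _) hc.le
      (exp_nonneg _))
  have hsub : {ω | ∃ n, y < pathSum g (X · ω) (D · ω) n} ⊆ E 0 \ ⋂ n, E n := by
    rintro ω ⟨n, hn⟩
    refine ⟨fun k hk => ?_, fun h => not_le.2 hn (Set.mem_iInter.1 h n n le_rfl)⟩
    rw [Nat.le_zero.1 hk, pathSum_zero]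
    exact hy
  have hpos : 0 < exp (θ * y) * c := by positivity
  rw [show u x₀ / c * exp (-(θ * y)) = u x₀ / (exp (θ * y) * c) by
      rw [exp_neg]; field_simp, ENNReal.ofReal_div_of_pos hpos,
    ENNReal.le_div_iff_mul_le (Or.inl (ENNReal.ofReal_pos.2 hpos).ne')
      (Or.inl ENNReal.ofReal_ne_top), mul_comm]
  calc ENNReal.ofReal (exp (θ * y) * c) * P {ω | ∃ n, y < pathSum g (X · ω) (D · ω) n}
      ≤ ENNReal.ofReal (exp (θ * y) * c) * P (E 0 \ ⋂ n, E n) := by gcongr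
    _ ≤ ∫⁻ ω in E 0, ENNReal.ofReal (exp (θ * pathSum g (X · ω) (D · ω) 0) * u (X 0 ω)) ∂P :=
        mul_measure_diff_iInter_le (W := fun n ω =>
            ENNReal.ofReal (exp (θ * pathSum g (X · ω) (D · ω) n) * u (X n ω)))
          hE (fun m n hmn ω hω k hk => hω k (hk.trans hmn))
          (hM.setLIntegral_exp_pathSum_succ hX hD hXD hDi hg hu y) hexit
    _ ≤ ∫⁻ ω, ENNReal.ofReal (exp (θ * pathSum g (X · ω) (D · ω) 0) * u (X 0 ω)) ∂P :=
        setLIntegral_le_lintegral _ _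
    _ = ENNReal.ofReal (u x₀) := by
        rw [lintegral_congr_ae (hX₀.mono fun ω h => by rw [pathSum_zero, mul_zero, exp_zero,
          one_mul, h]), lintegral_const, measure_univ, mul_one]

end Lundberg

theorem stmt_7_general
    {S : Type} [Fintype S]
    [MeasurableSpace S] [MeasurableSingletonClass S]
    {Ω : Type} [mΩ : MeasurableSpace Ω] (P : Measure Ω) [IsProbabilityMeasure P]
    -- the transition matrix: stochastic and irreducible
    (K : Matrix S S ℝ) (hKnn : ∀ x y, 0 ≤ K x y)
    -- the modulating Markov chain, started at x0, and the i.i.d. drivers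
    (X : ℕ → Ω → S) (hXmeas : ∀ n, Measurable (X n))
    (ξ η : ℕ → Ω → ℝ) (hξmeas : ∀ n, Measurable (ξ n)) (hηmeas : ∀ n, Measurable (η n))
    (x0 : S) (hX0 : ∀ᵐ ω ∂P, X 0 ω = x0)
    (hMarkov : ∀ (n : ℕ) (x : ℕ → S),
      P {ω | ∀ i ≤ n + 1, X i ω = x i}
        = P {ω | ∀ i ≤ n, X i ω = x i} * ENNReal.ofReal (K (x n) (x (n + 1))))
    (hiid : ∀ n : ℕ, 1 ≤ n →
      Measure.map (fun ω => (ξ n ω, η n ω)) P = Measure.map (fun ω => (ξ 1 ω, η 1 ω)) P)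
    (hindep : iIndepFun
      (fun (n : ℕ) (ω : Ω) => (ξ (n + 1) ω, η (n + 1) ω)) P)
    (hindX : IndepFun (fun ω (n : ℕ) => X n ω) (fun ω (n : ℕ) => (ξ (n + 1) ω, η (n + 1) ω)) P)
    -- discount and reward rate functions (rewards nonnegative)
    (γ : S → ℝ → ℝ) (hγm : ∀ x, Measurable (γ x))
    -- the accumulated rate process S_n = Σ_{k=1}^n γ(X_k, ξ_k), S_0 = 0
    (Sp : ℕ → Ω → ℝ)
    (hSp : ∀ n ω, Sp n ω = ∑ k ∈ Finset.range n, γ (X (k + 1) ω) (ξ (k + 1) ω))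
    -- Perron-Frobenius eigenfunctions u_θ > 0 and eigenvalue exp(ψ(θ)):
    -- u_θ(x) = E_x[exp(θ γ(X₁,ξ₁) - ψ(θ)) u_θ(X₁)] whenever the mgf is finite
    (u : ℝ → S → ℝ) (ψ : ℝ → ℝ) (hupos : ∀ θ x, 0 < u θ x)
    (heig : ∀ θ : ℝ, (∀ x, Integrable (fun ω => exp (θ * γ x (ξ 1 ω))) P) →
      ∀ x : S, u θ x = ∑ y, K x y * ((∫ ω, exp (θ * γ y (ξ 1 ω)) ∂P) * exp (-ψ θ) * u θ y))
    -- Assumption 2 (Cramér): ψ(θ*) = 0 for some θ* > 0 and ψ(θ) < ∞ for some θ > θ*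
    (θs : ℝ) (hθspos : 0 < θs) (hψ0 : ψ θs = 0)
    (hA2 : ∃ θp > θs, ∀ θ ∈ Set.Icc (0 : ℝ) θp,
      ∀ x, Integrable (fun ω => exp (θ * γ x (ξ 1 ω))) P)
    :
    ∃ c > (0 : ℝ), ∀ y : ℝ, 0 ≤ y →
      ∫⁻ ω in {ω | ∃ n : ℕ, y < Sp n ω},
          ENNReal.ofReal
            (exp (-(θs * Sp (sInf {n : ℕ | y < Sp n ω}) ω)) *
              (u θs x0 / u θs (X (sInf {n : ℕ | y < Sp n ω}) ω))) ∂P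
        ≤ ENNReal.ofReal (c * exp (-(2 * θs * y))) := by
  obtain ⟨θp, hθp, hint⟩ := hA2
  replace hint := hint θs ⟨hθspos.le, hθp.le⟩
  set D : ℕ → Ω → ℝ × ℝ := fun n ω => (ξ (n + 1) ω, η (n + 1) ω)
  have hD : ∀ n, Measurable (D n) := fun n => (hξmeas _).prodMk (hηmeas _)
  have hg : ∀ z, Measurable fun a : ℝ × ℝ => γ z a.1 := fun z => (hγm z).comp measurable_fst
  have hharm := sum_ofReal_mul_lintegral_exp_eq_of_eigen hKnn hg
    (fun n => ⟨(hD n).aemeasurable, (hD 0).aemeasurable, hiid (n + 1) (by omega)⟩) hint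
    (fun z => (hupos θs z).le) fun x => by simpa [hψ0] using (heig θs hint x).symm
  obtain ⟨zm, -, hzm⟩ := Finset.univ.exists_min_image (u θs) ⟨x0, Finset.mem_univ _⟩
  replace hzm : ∀ z, u θs zm ≤ u θs z := fun z => hzm z (Finset.mem_univ z)
  set r := u θs x0 / u θs zm
  have hr : 0 < r := div_pos (hupos θs x0) (hupos θs zm)
  obtain rfl : Sp = fun n ω => pathSum (fun z a => γ z a.1) (X · ω) (D · ω) n :=
    funext fun n => funext (hSp n)
  refine ⟨r ^ 2, by positivity, fun y hy => ?_⟩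
  calc _ ≤ ENNReal.ofReal (exp (-(θs * y)) * r) *
        P {ω | ∃ n, y < pathSum (fun z a => γ z a.1) (X · ω) (D · ω) n} :=
        setLIntegral_exp_neg_firstPassage_le (measurable_pathSum_comp hg hXmeas hD) X
          hθspos.le (hupos θs x0).le (hupos θs zm) hzm y
    _ ≤ ENNReal.ofReal (exp (-(θs * y)) * r) * ENNReal.ofReal (r * exp (-(θs * y))) := by
        gcongr
        exact HasTransitionMatrix.measure_exists_lt_pathSum_le hMarkov hXmeas hD hindX hindep
          hg hθspos.le hharm hX0 (hupos θs zm) hzm hy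
    _ = ENNReal.ofReal (r ^ 2 * exp (-(2 * θs * y))) := by
        rw [← ENNReal.ofReal_mul (by positivity),
          show -(2 * θs * y) = -(θs * y) + -(θs * y) by ring, exp_add]
        ring_nf

/-- Under Assumptions 1 and 2, with `σ(y) = inf{n ≥ 0 : S_n > y}`, there is `c ∈ (0,∞)` such
that for all `y ≥ 0`,
`E_{x₀}[exp(-θ* S_{σ(y)}) (u_{θ*}(x₀)/u_{θ*}(X_{σ(y)})) 1(σ(y) < ∞)] ≤ c exp(-2θ* y)`.
This quantity is the second moment of the exponentially tilted importance sampling estimator of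
`P_{x₀}(max_n S_n > y)`, so that estimator is strongly efficient. -/
theorem stmt_7
    {S : Type} [Fintype S] [DecidableEq S] [Nonempty S]
    [MeasurableSpace S] [MeasurableSingletonClass S]
    {Ω : Type} [mΩ : MeasurableSpace Ω] (P : Measure Ω) [IsProbabilityMeasure P]
    -- the transition matrix: stochastic and irreducible
    (K : Matrix S S ℝ) (hKnn : ∀ x y, 0 ≤ K x y) (hKrow : ∀ x, ∑ y, K x y = 1)
    (hKirr : ∀ x y, ∃ n : ℕ, 0 < (K ^ n) x y)
    -- the modulating Markov chain, started at x0, and the i.i.d. drivers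
    (X : ℕ → Ω → S) (hXmeas : ∀ n, Measurable (X n))
    (ξ η : ℕ → Ω → ℝ) (hξmeas : ∀ n, Measurable (ξ n)) (hηmeas : ∀ n, Measurable (η n))
    (x0 : S) (hX0 : ∀ᵐ ω ∂P, X 0 ω = x0)
    (hMarkov : ∀ (n : ℕ) (x : ℕ → S),
      P {ω | ∀ i ≤ n + 1, X i ω = x i}
        = P {ω | ∀ i ≤ n, X i ω = x i} * ENNReal.ofReal (K (x n) (x (n + 1))))
    (hiid : ∀ n : ℕ, 1 ≤ n →
      Measure.map (fun ω => (ξ n ω, η n ω)) P = Measure.map (fun ω => (ξ 1 ω, η 1 ω)) P)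
    (hindep : iIndepFun
      (fun (n : ℕ) (ω : Ω) => (ξ (n + 1) ω, η (n + 1) ω)) P)
    (hindX : IndepFun (fun ω (n : ℕ) => X n ω) (fun ω (n : ℕ) => (ξ (n + 1) ω, η (n + 1) ω)) P)
    -- discount and reward rate functions (rewards nonnegative)
    (γ lam : S → ℝ → ℝ) (hγm : ∀ x, Measurable (γ x)) (hlamm : ∀ x, Measurable (lam x))
    (hlamnn : ∀ x v, 0 ≤ lam x v)
    -- the accumulated rate process S_n = Σ_{k=1}^n γ(X_k, ξ_k), S_0 = 0
    (Sp : ℕ → Ω → ℝ)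
    (hSp : ∀ n ω, Sp n ω = ∑ k ∈ Finset.range n, γ (X (k + 1) ω) (ξ (k + 1) ω))
    -- Perron-Frobenius eigenfunctions u_θ > 0 and eigenvalue exp(ψ(θ)):
    -- u_θ(x) = E_x[exp(θ γ(X₁,ξ₁) - ψ(θ)) u_θ(X₁)] whenever the mgf is finite
    (u : ℝ → S → ℝ) (ψ : ℝ → ℝ) (hupos : ∀ θ x, 0 < u θ x)
    (heig : ∀ θ : ℝ, (∀ x, Integrable (fun ω => exp (θ * γ x (ξ 1 ω))) P) →
      ∀ x : S, u θ x = ∑ y, K x y * ((∫ ω, exp (θ * γ y (ξ 1 ω)) ∂P) * exp (-ψ θ) * u θ y))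
    -- Assumption 1: finite exponential moments in a neighborhood of the origin
    (hA1 : ∃ ε > (0 : ℝ), ∀ θ : ℝ, |θ| ≤ ε →
      ∀ x, Integrable (fun ω => exp (θ * γ x (ξ 1 ω))) P)
    -- Assumption 2 (Cramér): ψ(θ*) = 0 for some θ* > 0 and ψ(θ) < ∞ for some θ > θ*
    (θs : ℝ) (hθspos : 0 < θs) (hψ0 : ψ θs = 0)
    (hA2 : ∃ θp > θs, ∀ θ ∈ Set.Icc (0 : ℝ) θp,
      ∀ x, Integrable (fun ω => exp (θ * γ x (ξ 1 ω))) P)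
    :
    ∃ c > (0 : ℝ), ∀ y : ℝ, 0 ≤ y →
      ∫⁻ ω in {ω | ∃ n : ℕ, y < Sp n ω},
          ENNReal.ofReal
            (exp (-(θs * Sp (sInf {n : ℕ | y < Sp n ω}) ω)) *
              (u θs x0 / u θs (X (sInf {n : ℕ | y < Sp n ω}) ω))) ∂P
        ≤ ENNReal.ofReal (c * exp (-(2 * θs * y))) :=
  stmt_7_general (mΩ := mΩ) P K hKnn X hXmeas ξ η hξmeas hηmeas x0 hX0 hMarkov hiid hindep hindX γ
    hγm Sp hSp u ψ hupos heig θs hθspos hψ0 hA2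
end

section
/- Let Z be a Gamma random variable with shape θ* > 0 and rate λ > 0 and let D = 1/Z. Then for every Δ > 0, P(D > 1/Δ) = exp(−λΔ) λ^{θ*} Δ^{θ*}/(θ* Γ(θ*)) + R(Δ), where 0 ≤ R(Δ) ≤ λ^{θ*+1} Δ^{θ*+1}/(θ*(θ*+1)Γ(θ*)). In particular Δ^{−θ*} P(D > 1/Δ) → λ^{θ*}/(θ* Γ(θ*)) as Δ → 0, so D is regularly varying with index θ*. -/
/-!
Since `P(D > 1/Δ) = P(Z < Δ) = λ^θ/Γ(θ) ∫₀^Δ e^{-λz} z^{θ-1} dz`, everything reduces to the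
lower incomplete gamma integral. On `[0, Δ]` one has `e^{-λΔ} ≤ e^{-λz} ≤ e^{-λΔ} + λ(Δ - z)`
(the upper bound from `1 - e^{-x} ≤ x`), and integrating these against `z^{θ-1}` gives the
two-sided estimate. Dividing by `Δ^θ`, both bounds tend to `1/θ` as `Δ → 0⁺`.
-/

open MeasureTheory Real Set Filter Topology

lemma toReal_withDensity_ofReal_apply {α : Type*} [MeasurableSpace α] {μ : Measure α}
    {f : α → ℝ} {s : Set α} (hs : MeasurableSet s) (hf : IntegrableOn f s μ)
    (hf0 : ∀ x ∈ s, 0 ≤ f x) :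
    ((μ.withDensity fun x => ENNReal.ofReal (f x)) s).toReal = ∫ x in s, f x ∂μ := by
  rw [withDensity_apply _ hs,
    ← ofReal_integral_eq_lintegral_ofReal hf (ae_restrict_of_forall_mem hs hf0),
    ENNReal.toReal_ofReal (setIntegral_nonneg hs hf0)]

section IncompleteGamma

variable {θ lam Δ : ℝ}

lemma intervalIntegrable_exp_mul_rpow (hθ : 0 < θ) (lam a b : ℝ) :
    IntervalIntegrable (fun z => exp (-(lam * z)) * z ^ (θ - 1)) volume a b :=
  (intervalIntegral.intervalIntegrable_rpow' (by linarith)).continuousOn_mul (by fun_prop)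

lemma integral_rpow_sub_one (hθ : 0 < θ) (Δ : ℝ) : ∫ z in (0 : ℝ)..Δ, z ^ (θ - 1) = Δ ^ θ / θ := by
  rw [integral_rpow (Or.inl (by linarith)), sub_add_cancel, zero_rpow hθ.ne', sub_zero]

lemma exp_neg_mul_le_exp_neg_mul_add {z : ℝ} (hlam : 0 ≤ lam) (hz : 0 ≤ z) (hzΔ : z ≤ Δ) :
    exp (-(lam * z)) ≤ exp (-(lam * Δ)) + lam * (Δ - z) := by
  have hsplit : exp (-(lam * Δ)) = exp (-(lam * z)) * exp (-(lam * (Δ - z))) := by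
    rw [← exp_add]; ring_nf
  have hle_one : exp (-(lam * z)) ≤ 1 := exp_le_one_iff.mpr (by nlinarith)
  have htangent : 1 - lam * (Δ - z) ≤ exp (-(lam * (Δ - z))) := by
    linarith [add_one_le_exp (-(lam * (Δ - z)))]
  nlinarith [exp_pos (-(lam * z)), mul_nonneg hlam (sub_nonneg.mpr hzΔ)]

lemma le_integral_exp_mul_rpow (hθ : 0 < θ) (hlam : 0 ≤ lam) (hΔ : 0 ≤ Δ) :
    exp (-(lam * Δ)) * (Δ ^ θ / θ) ≤ ∫ z in (0 : ℝ)..Δ, exp (-(lam * z)) * z ^ (θ - 1) := by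
  rw [← integral_rpow_sub_one hθ, ← intervalIntegral.integral_const_mul]
  refine intervalIntegral.integral_mono_on hΔ
    ((intervalIntegral.intervalIntegrable_rpow' (by linarith)).const_mul _)
    (intervalIntegrable_exp_mul_rpow hθ lam 0 Δ) fun z hz => ?_
  gcongr
  · exact rpow_nonneg hz.1 _
  · exact hz.2

lemma integral_exp_mul_rpow_le (hθ : 0 < θ) (hlam : 0 ≤ lam) (hΔ : 0 ≤ Δ) :
    ∫ z in (0 : ℝ)..Δ, exp (-(lam * z)) * z ^ (θ - 1)
      ≤ exp (-(lam * Δ)) * (Δ ^ θ / θ) + lam * Δ ^ (θ + 1) / (θ * (θ + 1)) := by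
  have hpow : IntervalIntegrable (fun z : ℝ => z ^ (θ - 1)) volume 0 Δ :=
    intervalIntegral.intervalIntegrable_rpow' (by linarith)
  have hpow' : IntervalIntegrable (fun z : ℝ => z ^ θ) volume 0 Δ :=
    intervalIntegral.intervalIntegrable_rpow' (by linarith)
  have hmajorant : ∀ z ∈ Icc 0 Δ, exp (-(lam * z)) * z ^ (θ - 1)
      ≤ (exp (-(lam * Δ)) + lam * Δ) * z ^ (θ - 1) - lam * z ^ θ := by
    intro z hz
    have hrpow : z ^ θ = z ^ (θ - 1) * z := by
      rw [← rpow_add_one' hz.1 (by linarith), sub_add_cancel]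
    have := exp_neg_mul_le_exp_neg_mul_add hlam hz.1 hz.2
    rw [hrpow]
    nlinarith [rpow_nonneg hz.1 (θ - 1)]
  calc ∫ z in (0 : ℝ)..Δ, exp (-(lam * z)) * z ^ (θ - 1)
      ≤ ∫ z in (0 : ℝ)..Δ, (exp (-(lam * Δ)) + lam * Δ) * z ^ (θ - 1) - lam * z ^ θ :=
        intervalIntegral.integral_mono_on hΔ (intervalIntegrable_exp_mul_rpow hθ lam 0 Δ)
          ((hpow.const_mul _).sub (hpow'.const_mul _)) hmajorant
    _ = (exp (-(lam * Δ)) + lam * Δ) * (Δ ^ θ / θ) - lam * (Δ ^ (θ + 1) / (θ + 1)) := by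
        rw [intervalIntegral.integral_sub (hpow.const_mul _) (hpow'.const_mul _),
          intervalIntegral.integral_const_mul, intervalIntegral.integral_const_mul,
          integral_rpow_sub_one hθ, integral_rpow (Or.inl (by linarith)), zero_rpow (by linarith),
          sub_zero]
    _ = exp (-(lam * Δ)) * (Δ ^ θ / θ) + lam * Δ ^ (θ + 1) / (θ * (θ + 1)) := by
        rw [rpow_add_one' hΔ (by linarith)]
        field_simp
        ring

lemma tendsto_integral_exp_mul_rpow_div_rpow (hθ : 0 < θ) (hlam : 0 ≤ lam) :
    Tendsto (fun Δ => (∫ z in (0 : ℝ)..Δ, exp (-(lam * z)) * z ^ (θ - 1)) / Δ ^ θ)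
      (𝓝[>] 0) (𝓝 (1 / θ)) := by
  have hlower : Tendsto (fun Δ => exp (-(lam * Δ)) / θ) (𝓝[>] 0) (𝓝 (1 / θ)) :=
    tendsto_nhdsWithin_of_tendsto_nhds (by simpa using (by fun_prop : Continuous
      fun Δ => exp (-(lam * Δ)) / θ).tendsto 0)
  have hupper : Tendsto (fun Δ => exp (-(lam * Δ)) / θ + lam * Δ / (θ * (θ + 1)))
      (𝓝[>] 0) (𝓝 (1 / θ)) :=
    tendsto_nhdsWithin_of_tendsto_nhds (by simpa using (by fun_prop : Continuous
      fun Δ => exp (-(lam * Δ)) / θ + lam * Δ / (θ * (θ + 1))).tendsto 0)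
  refine tendsto_of_tendsto_of_tendsto_of_le_of_le' hlower hupper ?_ ?_ <;>
    filter_upwards [self_mem_nhdsWithin] with Δ (hΔ : 0 < Δ)
  · rw [le_div_iff₀ (rpow_pos_of_pos hΔ θ)]
    exact (le_integral_exp_mul_rpow hθ hlam hΔ.le).trans_eq' (by ring)
  · rw [div_le_iff₀ (rpow_pos_of_pos hΔ θ)]
    exact (integral_exp_mul_rpow_le hθ hlam hΔ.le).trans_eq (by rw [rpow_add_one hΔ.ne']; ring)

end IncompleteGamma

lemma toReal_gammaDensity_Ioo {θ lam Δ : ℝ} (hθ : 0 < θ) (hlam : 0 ≤ lam) (hΔ : 0 ≤ Δ) :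
    ((volume.withDensity fun z => ENNReal.ofReal
        (if 0 < z then exp (-(lam * z)) * lam ^ θ * z ^ (θ - 1) / Gamma θ else 0)) (Ioo 0 Δ)).toReal
      = lam ^ θ / Gamma θ * ∫ z in (0 : ℝ)..Δ, exp (-(lam * z)) * z ^ (θ - 1) := by
  have hdensity : EqOn
      (fun z => if 0 < z then exp (-(lam * z)) * lam ^ θ * z ^ (θ - 1) / Gamma θ else 0)
      (fun z => lam ^ θ / Gamma θ * (exp (-(lam * z)) * z ^ (θ - 1))) (Ioo 0 Δ) := by
    intro z hz
    simp only [if_pos hz.1]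
    ring
  have hint : IntegrableOn (fun z => lam ^ θ / Gamma θ * (exp (-(lam * z)) * z ^ (θ - 1)))
      (Ioo 0 Δ) := by
    refine IntegrableOn.mono_set ?_ Ioo_subset_Ioc_self
    exact (intervalIntegrable_iff_integrableOn_Ioc_of_le hΔ).mp
      ((intervalIntegrable_exp_mul_rpow hθ lam 0 Δ).const_mul _)
  rw [toReal_withDensity_ofReal_apply measurableSet_Ioo
      (hint.congr_fun hdensity.symm measurableSet_Ioo)
      (fun z hz => by simp only [if_pos hz.1]; have := hz.1; positivity),
    setIntegral_congr_fun measurableSet_Ioo hdensity, integral_const_mul,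
    ← integral_Ioc_eq_integral_Ioo, intervalIntegral.integral_of_le hΔ]

/-- Let `Z` be Gamma(θ*, λ) and `D = 1/Z` (so the law of `D` is `ν`, the pushforward of the
Gamma law under `z ↦ z⁻¹`). Then for every `Δ > 0`,
`P(D > 1/Δ) = exp(-λΔ) λ^θ* Δ^θ*/(θ* Γ(θ*)) + R(Δ)` with
`0 ≤ R(Δ) ≤ λ^(θ*+1) Δ^(θ*+1)/(θ*(θ*+1)Γ(θ*))`; in particular
`Δ^(-θ*) P(D > 1/Δ) → λ^θ*/(θ* Γ(θ*))` as `Δ ↓ 0`. -/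
theorem stmt_10 (θs lam : ℝ) (hθ : 0 < θs) (hlam : 0 < lam)
    (μZ : Measure ℝ)
    (hμZ : μZ = MeasureTheory.volume.withDensity fun z =>
      ENNReal.ofReal
        (if 0 < z then exp (-(lam * z)) * lam ^ θs * z ^ (θs - 1) / Real.Gamma θs else 0))
    (ν : Measure ℝ) (hν : ν = Measure.map (fun z : ℝ => z⁻¹) μZ) :
    (∀ Δ : ℝ, 0 < Δ → ∃ R : ℝ,
      (ν (Set.Ioi (1 / Δ))).toReal
          = exp (-(lam * Δ)) * lam ^ θs * Δ ^ θs / (θs * Real.Gamma θs) + R ∧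
        0 ≤ R ∧ R ≤ lam ^ (θs + 1) * Δ ^ (θs + 1) / (θs * (θs + 1) * Real.Gamma θs)) ∧
    Filter.Tendsto (fun Δ : ℝ => (ν (Set.Ioi (1 / Δ))).toReal / Δ ^ θs)
      (nhdsWithin 0 (Set.Ioi 0)) (nhds (lam ^ θs / (θs * Real.Gamma θs))) := by
  have hΓ : 0 < Gamma θs := Gamma_pos_of_pos hθ
  have hc : 0 < lam ^ θs / Gamma θs := div_pos (rpow_pos_of_pos hlam θs) hΓ
  have htail : ∀ Δ : ℝ, 0 < Δ → (ν (Ioi (1 / Δ))).toReal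
      = lam ^ θs / Gamma θs * ∫ z in (0 : ℝ)..Δ, exp (-(lam * z)) * z ^ (θs - 1) := by
    intro Δ hΔ
    rw [hν, Measure.map_apply measurable_inv measurableSet_Ioi, inv_preimage,
      inv_Ioi₀ (by positivity), one_div, inv_inv, hμZ,
      toReal_gammaDensity_Ioo hθ hlam.le hΔ.le]
  refine ⟨fun Δ hΔ => ⟨_, (add_sub_cancel _ _).symm, ?_, ?_⟩, ?_⟩
  · rw [htail Δ hΔ, sub_nonneg]
    exact (mul_le_mul_of_nonneg_left (le_integral_exp_mul_rpow hθ hlam.le hΔ.le)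
      hc.le).trans_eq' (by ring)
  · rw [htail Δ hΔ, sub_le_iff_le_add']
    refine (mul_le_mul_of_nonneg_left (integral_exp_mul_rpow_le hθ hlam.le hΔ.le)
      hc.le).trans_eq ?_
    rw [rpow_add_one hlam.ne']
    field_simp
  · rw [show lam ^ θs / (θs * Gamma θs) = lam ^ θs / Gamma θs * (1 / θs) by ring]
    refine ((tendsto_integral_exp_mul_rpow_div_rpow hθ hlam.le).const_mul _).congr' ?_
    filter_upwards [self_mem_nhdsWithin] with Δ (hΔ : 0 < Δ)
    rw [htail Δ hΔ, mul_div_assoc]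
end

section
/- Lyapunov inequality for importance sampling (Lemma 1 / LemLI): Let (W_n)_{n≥0} be a time-homogeneous Markov chain on a measurable space E with transition kernel Q, let A ⊆ E be a measurable target set, T = inf{n ≥ 0 : W_n ∈ A}, and let r : E×E → (0,∞) be measurable. Suppose h : E → [0,∞) is measurable, satisfies E_w[r(w,W_1) h(W_1)] ≤ h(w) for every w ∉ A, and h(w) ≥ 1 for every w ∈ A. Then for every w ∈ E, E_w[ (∏_{k=0}^{T−1} r(W_k, W_{k+1})) · 1(T < ∞) ] ≤ h(w). -/
/-!
Write `L_n = ∏_{k<n} r(W_k, W_{k+1})` and `a_n = E[1(T ≥ n) L_n h(W_n)]`, so that `a_0 = h(w)`.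
On `{T ≥ n+1}` the state `W_n` lies outside `A`, so the Markov property and the Lyapunov
inequality give `a_{n+1} ≤ E[1(T ≥ n+1) L_n h(W_n)]`, while `h ≥ 1` on `A` gives
`E[1(T = n) L_n] ≤ E[1(T = n) L_n h(W_n)]`. Adding, `E[1(T = n) L_n] + a_{n+1} ≤ a_n`, and
telescoping bounds `∑_n E[1(T = n) L_n] = E[L_T 1(T < ∞)]` by `a_0`.
-/

open MeasureTheory ProbabilityTheory Real Finset
open scoped ENNReal NNReal

section MarkovProperty

variable {E Ω : Type*} [MeasurableSpace E] [MeasurableSpace Ω] {P : Measure Ω} {Q : Kernel E E}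
  {W : ℕ → Ω → E}

theorem map_prod_eq_compProd [IsFiniteMeasure P] [IsSFiniteKernel Q] (hW : ∀ n, Measurable (W n))
    {n : ℕ}
    (hMarkov : ∀ f : (Fin (n + 1) → E) → ℝ≥0∞, Measurable f → ∀ g : E → ℝ≥0∞, Measurable g →
      ∫⁻ ω, f (fun i => W i.val ω) * g (W (n + 1) ω) ∂P
        = ∫⁻ ω, f (fun i => W i.val ω) * ∫⁻ y, g y ∂(Q (W n ω)) ∂P) :
    P.map (fun ω => ((fun i : Fin (n + 1) => W i ω), W (n + 1) ω))
      = P.map (fun ω (i : Fin (n + 1)) => W i ω) ⊗ₘ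
          Q.comap (fun v => v (Fin.last n)) (measurable_pi_apply _) := by
  have hX : Measurable fun ω (i : Fin (n + 1)) => W i ω := measurable_pi_lambda _ fun i => hW i
  have hXY := hX.prodMk (hW (n + 1))
  have rect : ∀ s t, MeasurableSet s → MeasurableSet t →
      P.map (fun ω => ((fun i : Fin (n + 1) => W i ω), W (n + 1) ω)) (s ×ˢ t)
        = (P.map (fun ω (i : Fin (n + 1)) => W i ω) ⊗ₘ
          Q.comap (fun v => v (Fin.last n)) (measurable_pi_apply _)) (s ×ˢ t) := by
    intro s t hs ht
    rw [Measure.map_apply hXY (hs.prod ht), Measure.compProd_apply_prod hs ht,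
      ← lintegral_indicator hs, lintegral_map ((Kernel.measurable_coe _ ht).indicator hs) hX,
      ← lintegral_indicator_one (hXY (hs.prod ht))]
    convert hMarkov (s.indicator 1) (measurable_one.indicator hs) (t.indicator 1)
      (measurable_one.indicator ht) using 2 <;> funext ω
    · by_cases h₁ : (fun i : Fin (n + 1) => W i ω) ∈ s <;> by_cases h₂ : W (n + 1) ω ∈ t <;>
        simp [h₁, h₂]
    · by_cases h₁ : (fun i : Fin (n + 1) => W i ω) ∈ s <;> simp [h₁, lintegral_indicator_one ht]
  refine ext_of_generate_finite _ generateFrom_prod.symm isPiSystem_prod ?_ ?_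
  · rintro _ ⟨s, hs, t, ht, rfl⟩
    exact rect s t hs ht
  · simpa using rect Set.univ Set.univ .univ .univ

theorem lintegral_mul_comp_succ_eq [IsFiniteMeasure P] [IsSFiniteKernel Q]
    (hW : ∀ n, Measurable (W n)) {n : ℕ}
    (hMarkov : ∀ f : (Fin (n + 1) → E) → ℝ≥0∞, Measurable f → ∀ g : E → ℝ≥0∞, Measurable g →
      ∫⁻ ω, f (fun i => W i.val ω) * g (W (n + 1) ω) ∂P
        = ∫⁻ ω, f (fun i => W i.val ω) * ∫⁻ y, g y ∂(Q (W n ω)) ∂P)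
    {G : (ℕ → E) → ℝ≥0∞} (hG : Measurable G) (hGn : DependsOn G (Set.Iic n))
    {φ : E → E → ℝ≥0∞} (hφ : Measurable (Function.uncurry φ)) :
    ∫⁻ ω, G (fun k => W k ω) * φ (W n ω) (W (n + 1) ω) ∂P
      = ∫⁻ ω, G (fun k => W k ω) * ∫⁻ y, φ (W n ω) y ∂(Q (W n ω)) ∂P := by
  set extend : (Fin (n + 1) → E) → ℕ → E := fun v k => v (Fin.clamp k n)
  have hextend : ∀ ω, G (fun k => W k ω) = G (extend fun i => W i ω) := fun ω =>
    hGn fun k hk => by simp [extend, Fin.clamp, min_eq_left (Set.mem_Iic.mp hk)]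
  set Φ : (Fin (n + 1) → E) × E → ℝ≥0∞ := fun p => G (extend p.1) * φ (p.1 (Fin.last n)) p.2
  have hΦ : Measurable Φ :=
    (hG.comp (by fun_prop)).mul
      (hφ.comp (f := fun p : (Fin (n + 1) → E) × E => (p.1 (Fin.last n), p.2)) (by fun_prop))
  have hX : Measurable fun ω (i : Fin (n + 1)) => W i ω := measurable_pi_lambda _ fun i => hW i
  calc ∫⁻ ω, G (fun k => W k ω) * φ (W n ω) (W (n + 1) ω) ∂P
      = ∫⁻ p, Φ p ∂(P.map fun ω => ((fun i : Fin (n + 1) => W i ω), W (n + 1) ω)) := by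
        rw [lintegral_map hΦ (hX.prodMk (hW (n + 1)))]
        simp only [Φ, hextend, Fin.val_last]
    _ = ∫⁻ ω, ∫⁻ y, Φ ((fun i : Fin (n + 1) => W i ω), y) ∂(Q (W n ω)) ∂P := by
        rw [map_prod_eq_compProd hW hMarkov, Measure.lintegral_compProd hΦ,
          lintegral_map hΦ.lintegral_kernel_prod_right' hX]
        simp [Kernel.comap_apply]
    _ = ∫⁻ ω, G (fun k => W k ω) * ∫⁻ y, φ (W n ω) y ∂(Q (W n ω)) ∂P := by
        refine lintegral_congr fun ω => ?_
        have hφω : Measurable (φ (W n ω)) := hφ.comp measurable_prodMk_left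
        simp only [Φ, Fin.val_last, lintegral_const_mul _ hφω, hextend]

end MarkovProperty

theorem ENNReal.tsum_le_of_add_le {a b : ℕ → ℝ≥0∞} (hab : ∀ n, b n + a (n + 1) ≤ a n) :
    ∑' n, b n ≤ a 0 := by
  have hsum : ∀ n, ∑ k ∈ range n, b k + a n ≤ a 0 := by
    intro n
    induction n with
    | zero => simp
    | succ n ih =>
      calc ∑ k ∈ range (n + 1), b k + a (n + 1) = ∑ k ∈ range n, b k + (b n + a (n + 1)) := by
            rw [sum_range_succ, add_assoc]
        _ ≤ a 0 := (add_le_add_right (hab n) _).trans ih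
  exact ENNReal.tsum_le_of_sum_range_le fun n => le_self_add.trans (hsum n)

section FirstPassage

variable {E : Type*} {A : Set E} {r : E → E → ℝ}

/-- `1(T ≥ n) ∏_{k < n} r(x k, x (k+1))` along a path `x`, where `T` is the hitting time of `A`. -/
noncomputable def survivingLikelihood (A : Set E) (r : E → E → ℝ) (n : ℕ) (x : ℕ → E) : ℝ≥0∞ :=
  ∏ k ∈ range n, Aᶜ.indicator 1 (x k) * ENNReal.ofReal (r (x k) (x (k + 1)))

theorem measurable_survivingLikelihood [MeasurableSpace E] (hA : MeasurableSet A)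
    (hr : Measurable (Function.uncurry r)) (n : ℕ) :
    Measurable (survivingLikelihood A r n) :=
  Finset.measurable_prod _ fun k _ =>
    ((measurable_one.indicator hA.compl).comp (measurable_pi_apply k)).mul
      (ENNReal.measurable_ofReal.comp
        (hr.comp (f := fun x : ℕ → E => (x k, x (k + 1))) (by fun_prop)))

theorem dependsOn_survivingLikelihood (n : ℕ) :
    DependsOn (survivingLikelihood A r n) (Set.Iic n) := fun x y hxy =>
  prod_congr rfl fun k hk => by
    have hk : k < n := mem_range.mp hk
    rw [hxy k (by simp; omega), hxy (k + 1) (by simp; omega)]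

theorem survivingLikelihood_eq_zero {n k : ℕ} {x : ℕ → E} (hk : k < n) (hxk : x k ∈ A) :
    survivingLikelihood A r n x = 0 :=
  prod_eq_zero (mem_range.mpr hk) (by simp [hxk])

theorem survivingLikelihood_eq_prod {n : ℕ} {x : ℕ → E} (hx : ∀ k < n, x k ∉ A) :
    survivingLikelihood A r n x = ∏ k ∈ range n, ENNReal.ofReal (r (x k) (x (k + 1))) :=
  prod_congr rfl fun k hk => by simp [hx k (mem_range.mp hk)]

theorem indicator_exists_mem_eq_tsum (hr : ∀ a b, 0 ≤ r a b) (x : ℕ → E) :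
    {x : ℕ → E | ∃ n, x n ∈ A}.indicator
        (fun x => ENNReal.ofReal (∏ k ∈ range (sInf {n | x n ∈ A}), r (x k) (x (k + 1)))) x
      = ∑' n, A.indicator 1 (x n) * survivingLikelihood A r n x := by
  by_cases hx : ∃ n, x n ∈ A
  · set T := sInf {n | x n ∈ A}
    have hT : ∀ k < T, x k ∉ A := fun k hk => Nat.notMem_of_lt_sInf hk
    have hxT : x T ∈ A := Nat.sInf_mem hx
    rw [Set.indicator_of_mem (s := {x : ℕ → E | ∃ n, x n ∈ A}) hx, tsum_eq_single T,
      Set.indicator_of_mem hxT, Pi.one_apply, survivingLikelihood_eq_prod hT,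
      ENNReal.ofReal_prod_of_nonneg fun _ _ => hr _ _, one_mul]
    intro n hn
    by_cases hxn : x n ∈ A
    · have hTn : T < n := lt_of_le_of_ne (Nat.sInf_le hxn) (Ne.symm hn)
      rw [survivingLikelihood_eq_zero hTn hxT, mul_zero]
    · simp [hxn]
  · push Not at hx
    simp [hx]

end FirstPassage

section Lyapunov

variable {E Ω : Type*} [MeasurableSpace E] [MeasurableSpace Ω] {P : Measure Ω} {Q : Kernel E E}
  {W : ℕ → Ω → E} {A : Set E} {r : E → E → ℝ} {h : E → ℝ}

theorem indicator_add_indicator_compl_mul_le (hLI : ∀ a ∉ A,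
      ∫⁻ y, ENNReal.ofReal (r a y * h y) ∂(Q a) ≤ ENNReal.ofReal (h a))
    (hbdy : ∀ a ∈ A, 1 ≤ h a) (a : E) :
    A.indicator 1 a + Aᶜ.indicator 1 a * ∫⁻ y, ENNReal.ofReal (r a y * h y) ∂(Q a)
      ≤ ENNReal.ofReal (h a) := by
  by_cases ha : a ∈ A
  · simpa [ha] using ENNReal.one_le_ofReal.mpr (hbdy a ha)
  · simpa [ha] using hLI a ha

theorem lintegral_hit_add_lintegral_survive_succ_le [IsFiniteMeasure P] [IsSFiniteKernel Q]
    (hW : ∀ n, Measurable (W n)) {n : ℕ}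
    (hMarkov : ∀ f : (Fin (n + 1) → E) → ℝ≥0∞, Measurable f → ∀ g : E → ℝ≥0∞, Measurable g →
      ∫⁻ ω, f (fun i => W i.val ω) * g (W (n + 1) ω) ∂P
        = ∫⁻ ω, f (fun i => W i.val ω) * ∫⁻ y, g y ∂(Q (W n ω)) ∂P)
    (hA : MeasurableSet A) (hr : Measurable (Function.uncurry r)) (hr₀ : ∀ a b, 0 ≤ r a b)
    (hh : Measurable h)
    (hLI : ∀ a ∉ A, ∫⁻ y, ENNReal.ofReal (r a y * h y) ∂(Q a) ≤ ENNReal.ofReal (h a))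
    (hbdy : ∀ a ∈ A, 1 ≤ h a) :
    ∫⁻ ω, A.indicator 1 (W n ω) * survivingLikelihood A r n (fun k => W k ω) ∂P
      + ∫⁻ ω, survivingLikelihood A r (n + 1) (fun k => W k ω)
          * ENNReal.ofReal (h (W (n + 1) ω)) ∂P
      ≤ ∫⁻ ω, survivingLikelihood A r n (fun k => W k ω) * ENNReal.ofReal (h (W n ω)) ∂P := by
  set L := fun ω => survivingLikelihood A r n (fun k => W k ω)
  have hL : Measurable L :=
    (measurable_survivingLikelihood hA hr n).comp (measurable_pi_lambda _ hW)
  have hsucc : ∀ ω,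
      survivingLikelihood A r (n + 1) (fun k => W k ω) * ENNReal.ofReal (h (W (n + 1) ω))
        = Aᶜ.indicator 1 (W n ω) * L ω
          * ENNReal.ofReal (r (W n ω) (W (n + 1) ω) * h (W (n + 1) ω)) := by
    intro ω
    simp only [L, survivingLikelihood, prod_range_succ, ENNReal.ofReal_mul (hr₀ _ _)]
    ring
  have hstep := lintegral_mul_comp_succ_eq hW hMarkov
    (G := fun x => Aᶜ.indicator 1 (x n) * survivingLikelihood A r n x)
    (((measurable_one.indicator hA.compl).comp (measurable_pi_apply n)).mul
      (measurable_survivingLikelihood hA hr n))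
    (fun x y hxy => by
      simp only [hxy n Set.self_mem_Iic, dependsOn_survivingLikelihood n hxy])
    (φ := fun a y => ENNReal.ofReal (r a y * h y))
    (ENNReal.measurable_ofReal.comp (hr.mul (hh.comp measurable_snd)))
  calc _ = ∫⁻ ω, A.indicator 1 (W n ω) * L ω ∂P
        + ∫⁻ ω, Aᶜ.indicator 1 (W n ω) * L ω
          * ∫⁻ y, ENNReal.ofReal (r (W n ω) y * h y) ∂(Q (W n ω)) ∂P := by
        rw [lintegral_congr hsucc, hstep]
    _ = ∫⁻ ω, L ω * (A.indicator 1 (W n ω) + Aᶜ.indicator 1 (W n ω)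
          * ∫⁻ y, ENNReal.ofReal (r (W n ω) y * h y) ∂(Q (W n ω))) ∂P := by
        rw [← lintegral_add_left (f := fun ω => A.indicator 1 (W n ω) * L ω)
          (((measurable_one.indicator hA).comp (hW n)).mul hL)]
        congr with ω
        ring
    _ ≤ _ := lintegral_mono fun ω =>
        mul_le_mul_right (indicator_add_indicator_compl_mul_le hLI hbdy (W n ω)) _

end Lyapunov

theorem stmt_12_general
    {E : Type} [MeasurableSpace E]
    {Ω : Type} [MeasurableSpace Ω] (P : Measure Ω) [IsProbabilityMeasure P]
    (Q : Kernel E E) [IsMarkovKernel Q]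
    (W : ℕ → Ω → E) (hWmeas : ∀ n, Measurable (W n))
    (w : E) (hW0 : ∀ᵐ ω ∂P, W 0 ω = w)
    (hMarkov : ∀ (n : ℕ) (f : (Fin (n + 1) → E) → ℝ≥0∞), Measurable f →
      ∀ g : E → ℝ≥0∞, Measurable g →
        ∫⁻ ω, f (fun i => W i.val ω) * g (W (n + 1) ω) ∂P
          = ∫⁻ ω, f (fun i => W i.val ω) * ∫⁻ y, g y ∂(Q (W n ω)) ∂P)
    (A : Set E) (hA : MeasurableSet A)
    (r : E → E → ℝ) (hrmeas : Measurable fun p : E × E => r p.1 p.2)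
    (hrpos : ∀ a b, 0 < r a b)
    (h : E → ℝ) (hhmeas : Measurable h)
    (hLI : ∀ a ∉ A, ∫⁻ y, ENNReal.ofReal (r a y * h y) ∂(Q a) ≤ ENNReal.ofReal (h a))
    (hbdy : ∀ a ∈ A, 1 ≤ h a) :
    ∫⁻ ω in {ω | ∃ n, W n ω ∈ A},
        ENNReal.ofReal
          (∏ k ∈ Finset.range (sInf {n | W n ω ∈ A}), r (W k ω) (W (k + 1) ω)) ∂P
      ≤ ENNReal.ofReal (h w) := by
  have hr₀ : ∀ a b, 0 ≤ r a b := fun a b => (hrpos a b).le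
  have hpath : Measurable fun ω k => W k ω := measurable_pi_lambda _ hWmeas
  have hhit : MeasurableSet {ω | ∃ n, W n ω ∈ A} := by
    simp only [Set.ofPred_exists]
    exact MeasurableSet.iUnion fun n => hWmeas n hA
  have hstart :
      ∫⁻ ω, survivingLikelihood A r 0 (fun k => W k ω) * ENNReal.ofReal (h (W 0 ω)) ∂P
        = ENNReal.ofReal (h w) := by
    rw [lintegral_congr_ae (g := fun _ => ENNReal.ofReal (h w))
      (hW0.mono fun ω hω => by simp [survivingLikelihood, hω]),
      lintegral_const, measure_univ, mul_one]
  calc _ = ∫⁻ ω, ∑' n, A.indicator 1 (W n ω)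
          * survivingLikelihood A r n (fun k => W k ω) ∂P := by
        rw [← lintegral_indicator hhit]
        exact lintegral_congr fun ω => indicator_exists_mem_eq_tsum hr₀ (fun k => W k ω)
    _ = ∑' n, ∫⁻ ω, A.indicator 1 (W n ω) * survivingLikelihood A r n (fun k => W k ω) ∂P :=
        lintegral_tsum fun n => (((measurable_one.indicator hA).comp (hWmeas n)).mul
          ((measurable_survivingLikelihood hA hrmeas n).comp hpath)).aemeasurable
    _ ≤ _ := ENNReal.tsum_le_of_add_le fun n =>
        lintegral_hit_add_lintegral_survive_succ_le hWmeas (hMarkov n) hA hrmeas hr₀ hhmeas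
          hLI hbdy
    _ = ENNReal.ofReal (h w) := hstart

/-- Lyapunov inequality for importance sampling. `(W_n)` is a Markov chain on `E` with
transition kernel `Q` started at `w`, `A` is the target set, `T = inf{n : W_n ∈ A}`, and
`r : E × E → (0,∞)` is a per-step likelihood ratio. If `h ≥ 0` satisfies the Lyapunov
inequality `E_w[r(w, W₁) h(W₁)] ≤ h(w)` off `A` and `h ≥ 1` on `A`, then
`E_w[(∏_{k<T} r(W_k, W_{k+1})) 1(T < ∞)] ≤ h(w)`. -/
theorem stmt_12
    {E : Type} [MeasurableSpace E]
    {Ω : Type} [MeasurableSpace Ω] (P : Measure Ω) [IsProbabilityMeasure P]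
    (Q : Kernel E E) [IsMarkovKernel Q]
    (W : ℕ → Ω → E) (hWmeas : ∀ n, Measurable (W n))
    (w : E) (hW0 : ∀ᵐ ω ∂P, W 0 ω = w)
    (hMarkov : ∀ (n : ℕ) (f : (Fin (n + 1) → E) → ℝ≥0∞), Measurable f →
      ∀ g : E → ℝ≥0∞, Measurable g →
        ∫⁻ ω, f (fun i => W i.val ω) * g (W (n + 1) ω) ∂P
          = ∫⁻ ω, f (fun i => W i.val ω) * ∫⁻ y, g y ∂(Q (W n ω)) ∂P)
    (A : Set E) (hA : MeasurableSet A)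
    (r : E → E → ℝ) (hrmeas : Measurable fun p : E × E => r p.1 p.2)
    (hrpos : ∀ a b, 0 < r a b)
    (h : E → ℝ) (hhmeas : Measurable h) (hhnn : ∀ a, 0 ≤ h a)
    (hLI : ∀ a ∉ A, ∫⁻ y, ENNReal.ofReal (r a y * h y) ∂(Q a) ≤ ENNReal.ofReal (h a))
    (hbdy : ∀ a ∈ A, 1 ≤ h a) :
    ∫⁻ ω in {ω | ∃ n, W n ω ∈ A},
        ENNReal.ofReal
          (∏ k ∈ Finset.range (sInf {n | W n ω ∈ A}), r (W k ω) (W (k + 1) ω)) ∂P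
      ≤ ENNReal.ofReal (h w) :=
  stmt_12_general P Q W hWmeas w hW0 hMarkov A hA r hrmeas hrpos h hhmeas hLI hbdy
end
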